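/- arXiv:2301.05002 — 7 statements merged into one kernel-verified Lean document; each statement's English description precedes it below -/
import Mathlib

section
/- Let x ∈ X with φ(x) finite, let γ⁰ > 0, τ > 1, δ ∈ (0,1), and suppose x is not an M-stationary point of min ψ, i.e. 0 ∉ ∇f(x) + ∂φ(x). If for every i ∈ ℕ the point yⁱ ∈ X is a global minimizer of y ↦ f(x) + ⟨∇f(x), y − x⟩ + (τⁱγ⁰/2)‖y − x‖² + φ(y), then there exists an index i ∈ ℕ such that ψ(yⁱ) ≤ ψ(x) − δ(τⁱγ⁰/2)‖yⁱ − x‖². (In other words, the backtracking inner loop of the proximal gradient method terminates after finitely many steps at any non-M-stationary point.) -/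
open Filter Topology Set Pointwise

variable {X : Type*} [NormedAddCommGroup X] [InnerProductSpace ℝ X] [FiniteDimensional ℝ X]

/-- The objective `ψ = f + φ` with extended-real values. -/
noncomputable def psi (f : X → ℝ) (φ : X → EReal) : X → EReal :=
  fun z => (f z : EReal) + φ z

/-- The subproblem objective of the proximal gradient method at base point `x`
with stepsize parameter `γ`. -/
noncomputable def proxModel (f : X → ℝ) (φ : X → EReal) (x : X) (γ : ℝ) : X → EReal :=
  fun z => ((f x + (inner ℝ (gradient f x) (z - x) : ℝ) + γ / 2 * ‖z - x‖ ^ 2 : ℝ) : EReal) + φ z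

/-- Fréchet (regular) subdifferential of `g` at `x`. -/
def frechetSubdiff (g : X → EReal) (x : X) : Set X :=
  {η | ∀ ε : ℝ, 0 < ε →
      ∀ᶠ y in nhds x, g x + (((inner ℝ η (y - x) : ℝ) - ε * ‖y - x‖ : ℝ) : EReal) ≤ g y}

/-- Limiting (Mordukhovich) subdifferential of `g` at `x`. -/
def limitingSubdiff (g : X → EReal) (x : X) : Set X :=
  {η | ∃ u v : ℕ → X,
      Tendsto u atTop (nhds x) ∧ Tendsto (fun j => g (u j)) atTop (nhds (g x)) ∧
      Tendsto v atTop (nhds η) ∧ ∀ j, v j ∈ frechetSubdiff g (u j)}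

/-- The sequences `x` (iterates) and `γ` (stepsizes) are generated by the proximal
gradient method with parameters `τ > 1`, `0 < γmin ≤ γmax`, `δ ∈ (0,1)`:
at every iteration `k` there are a chosen `γ0 ∈ [γmin, γmax]`, trial points `y j`
(each a global minimizer of the subproblem with stepsize `τ ^ j * γ0`), and a first
index `i` at which the acceptance criterion holds; then `γ k = τ ^ i * γ0` and
`x (k+1) = y i`. -/
structure ProxGrad (f : X → ℝ) (φ : X → EReal) (τ γmin γmax δ : ℝ)
    (x : ℕ → X) (γ : ℕ → ℝ) : Prop where
  htau : 1 < τ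
  hgmin : 0 < γmin
  hgmm : γmin ≤ γmax
  hdelta0 : 0 < δ
  hdelta1 : δ < 1
  hx0 : φ (x 0) ≠ ⊤
  step : ∀ k : ℕ, ∃ (γ0 : ℝ) (i : ℕ) (y : ℕ → X),
      γmin ≤ γ0 ∧ γ0 ≤ γmax ∧
      (∀ j ≤ i, ∀ z : X,
        proxModel f φ (x k) (τ ^ j * γ0) (y j) ≤ proxModel f φ (x k) (τ ^ j * γ0) z) ∧
      psi f φ (y i) ≤
        psi f φ (x k) - ((δ * (τ ^ i * γ0) / 2 * ‖y i - x k‖ ^ 2 : ℝ) : EReal) ∧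
      (∀ j < i, ¬ psi f φ (y j) ≤
        psi f φ (x k) - ((δ * (τ ^ j * γ0) / 2 * ‖y j - x k‖ ^ 2 : ℝ) : EReal)) ∧
      γ k = τ ^ i * γ0 ∧ x (k + 1) = y i

/-- Assumption A: `ψ` is bounded below on `dom φ`, `φ` is bounded below by an affine
function, and `∇f` is locally Lipschitz continuous. -/
def AssumptionA (f : X → ℝ) (φ : X → EReal) : Prop :=
  (∃ m : ℝ, ∀ z : X, φ z ≠ ⊤ → (m : EReal) ≤ psi f φ z) ∧
  (∃ a : X, ∃ b : ℝ, ∀ z : X, (((inner ℝ a z : ℝ) + b : ℝ) : EReal) ≤ φ z) ∧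
  LocallyLipschitz (gradient f)

/-- `g` has the Kurdyka–Łojasiewicz property at `xs` with constant `η` and
desingularization function `χ`. -/
def HasKLProperty (g : X → EReal) (xs : X) (η : ℝ) (χ : ℝ → ℝ) : Prop :=
  0 < η ∧ (limitingSubdiff g xs).Nonempty ∧
  ContinuousOn χ (Icc 0 η) ∧ ConcaveOn ℝ (Icc 0 η) χ ∧
  (∀ t ∈ Icc (0 : ℝ) η, 0 ≤ χ t) ∧ χ 0 = 0 ∧
  (∀ t ∈ Ioo (0 : ℝ) η, DifferentiableAt ℝ χ t ∧ 0 < deriv χ t) ∧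
  ContinuousOn (deriv χ) (Ioo 0 η) ∧
  ∃ U ∈ nhds xs, ∀ y ∈ U, g xs < g y → g y < g xs + (η : EReal) →
    1 ≤ deriv χ ((g y - g xs).toReal) * Metric.infDist 0 (limitingSubdiff g y)

private lemma quadBound {a b c : ℝ} (hb : 0 ≤ b) (hc : 0 ≤ c)
    (h : a ^ 2 ≤ b * a + c) : a ≤ b + Real.sqrt c := by
  rcases le_or_gt a (b + Real.sqrt c) with h' | h'
  · exact h'
  · nlinarith [Real.sq_sqrt hc, Real.sqrt_nonneg c]

private lemma erealSubLe {r s : ℝ} {e : EReal} (h : (r : EReal) ≤ (s : EReal) + e) :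
    ((r - s : ℝ) : EReal) ≤ e := by
  induction e using EReal.rec with
  | bot => simp at h
  | coe t =>
      rw [← EReal.coe_add, EReal.coe_le_coe_iff] at h
      exact EReal.coe_le_coe_iff.2 (by linarith)
  | top => exact le_top

/-- the backtracking inner loop of the proximal gradient method
terminates after finitely many steps at any non-M-stationary point. -/
theorem statement0
    (f : X → ℝ) (φ : X → EReal)
    (hf : ContDiff ℝ 1 f) (hφlsc : LowerSemicontinuous φ)
    (hφbot : ∀ z : X, φ z ≠ ⊥) (hproper : ∃ z : X, φ z ≠ ⊤)
    (haff : ∃ a : X, ∃ b : ℝ, ∀ z : X, (((inner ℝ a z : ℝ) + b : ℝ) : EReal) ≤ φ z)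
    (x : X) (hx : φ x ≠ ⊤)
    (γ0 τ δ : ℝ) (hγ0 : 0 < γ0) (hτ : 1 < τ) (hδ : δ ∈ Set.Ioo (0 : ℝ) 1)
    (hstat : (0 : X) ∉ ({gradient f x} : Set X) + limitingSubdiff φ x)
    (y : ℕ → X)
    (hy : ∀ i : ℕ, ∀ z : X, proxModel f φ x (τ ^ i * γ0) (y i) ≤ proxModel f φ x (τ ^ i * γ0) z) :
    ∃ i : ℕ, psi f φ (y i) ≤ psi f φ x - ((δ * (τ ^ i * γ0) / 2 * ‖y i - x‖ ^ 2 : ℝ) : EReal) := by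
  by_contra hno
  push_neg at hno
  obtain ⟨hδ0, hδ1⟩ := hδ
  obtain ⟨a, b, haff⟩ := haff
  set G := gradient f x with hG
  have hγpos : ∀ i : ℕ, 0 < τ ^ i * γ0 :=
    fun i => mul_pos (pow_pos (lt_trans one_pos hτ) i) hγ0
  obtain ⟨px, hpx⟩ : ∃ px : ℝ, φ x = (px : EReal) :=
    ⟨(φ x).toReal, (EReal.coe_toReal hx (hφbot x)).symm⟩
  have hyR : ∀ i : ℕ, ∀ z : X,
      ((f x + (inner ℝ G (y i - x) : ℝ) + (τ ^ i * γ0) / 2 * ‖y i - x‖ ^ 2 : ℝ) : EReal) + φ (y i)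
      ≤ ((f x + (inner ℝ G (z - x) : ℝ) + (τ ^ i * γ0) / 2 * ‖z - x‖ ^ 2 : ℝ) : EReal) + φ z :=
    hy
  -- minimality at z = x
  have hminx : ∀ i : ℕ,
      ((f x + (inner ℝ G (y i - x) : ℝ) + (τ ^ i * γ0) / 2 * ‖y i - x‖ ^ 2 : ℝ) : EReal) + φ (y i)
      ≤ ((f x : ℝ) : EReal) + φ x := by
    intro i
    have h := hyR i x
    simpa using h
  -- φ (y i) is finite
  have hfin : ∀ i : ℕ, ∃ p : ℝ, φ (y i) = (p : EReal) := by
    intro i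
    refine ⟨(φ (y i)).toReal, (EReal.coe_toReal ?_ (hφbot (y i))).symm⟩
    intro hT
    have h := hminx i
    rw [hT, EReal.coe_add_top, hpx, ← EReal.coe_add, top_le_iff] at h
    exact EReal.coe_ne_top _ h
  choose p hp using hfin
  -- key real inequality from minimality at x
  have hkey : ∀ i : ℕ,
      p i + (inner ℝ G (y i - x) : ℝ) + (τ ^ i * γ0) / 2 * ‖y i - x‖ ^ 2 ≤ px := by
    intro i
    have h := hminx i
    rw [hp i, hpx, ← EReal.coe_add, ← EReal.coe_add, EReal.coe_le_coe_iff] at h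
    linarith
  -- affine lower bound, real form
  have hA : ∀ z : X, ∀ q : ℝ, φ z = (q : EReal) → (inner ℝ a z : ℝ) + b ≤ q := by
    intro z q hq
    have h := haff z
    rw [hq, EReal.coe_le_coe_iff] at h
    exact h
  have hK1 : 0 ≤ px - (inner ℝ a x : ℝ) - b := by
    have := hA x px hpx; linarith
  -- ‖y i - x‖ → 0
  have hΓtop : Tendsto (fun i : ℕ => τ ^ i * γ0) atTop atTop :=
    (tendsto_pow_atTop_atTop_of_one_lt hτ).atTop_mul_const hγ0
  have hdto : Tendsto (fun i => ‖y i - x‖) atTop (nhds 0) := by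
    set K1 : ℝ := px - (inner ℝ a x : ℝ) - b with hK1def
    set K2 : ℝ := ‖G‖ + ‖a‖ with hK2def
    have hK2 : 0 ≤ K2 := add_nonneg (norm_nonneg _) (norm_nonneg _)
    have hbound : ∀ i : ℕ, ‖y i - x‖ ≤
        2 * K2 / (τ ^ i * γ0) + Real.sqrt (2 * K1 / (τ ^ i * γ0)) := by
      intro i
      refine quadBound (by positivity) (by positivity) ?_
      rw [div_mul_eq_mul_div, ← add_div, le_div_iff₀ (hγpos i)]
      have h1 := hkey i
      have h2 := hA (y i) (p i) (hp i)
      have h3 : (inner ℝ a (y i) : ℝ) = (inner ℝ a x : ℝ) + (inner ℝ a (y i - x) : ℝ) := by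
        rw [← inner_add_right]; norm_num
      have h4 := abs_real_inner_le_norm a (y i - x)
      have h5 := abs_real_inner_le_norm G (y i - x)
      have h6 := neg_abs_le (inner ℝ a (y i - x) : ℝ)
      have h7 := neg_abs_le (inner ℝ G (y i - x) : ℝ)
      nlinarith [norm_nonneg (y i - x), hγpos i]
    refine squeeze_zero (fun i => norm_nonneg _) hbound ?_
    have h1 : Tendsto (fun i : ℕ => 2 * K2 / (τ ^ i * γ0)) atTop (nhds 0) :=
      tendsto_const_nhds.div_atTop hΓtop
    have h2 : Tendsto (fun i : ℕ => Real.sqrt (2 * K1 / (τ ^ i * γ0))) atTop (nhds 0) := by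
      have h3 : Tendsto (fun i : ℕ => 2 * K1 / (τ ^ i * γ0)) atTop (nhds 0) :=
        tendsto_const_nhds.div_atTop hΓtop
      have := (Real.continuous_sqrt.tendsto 0).comp h3
      simpa [Function.comp_def] using this
    simpa using h1.add h2
  have hyto : Tendsto y atTop (nhds x) := by
    rw [tendsto_iff_norm_sub_tendsto_zero]
    exact hdto
  -- the failed acceptance criterion, real form
  have hstar : ∀ i : ℕ,
      f x + px - δ * (τ ^ i * γ0) / 2 * ‖y i - x‖ ^ 2 < f (y i) + p i := by
    intro i
    have h := hno i
    simp only [psi, hp i, hpx, ← EReal.coe_add, ← EReal.coe_sub] at h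
    exact EReal.coe_lt_coe_iff.1 h
  have hstar2 : ∀ i : ℕ,
      (1 - δ) * ((τ ^ i * γ0) / 2) * ‖y i - x‖ ^ 2
        < f (y i) - f x - (inner ℝ G (y i - x) : ℝ) := by
    intro i
    have h1 := hkey i
    have h2 := hstar i
    nlinarith
  -- Fréchet subdifferential membership at each y i
  have hfre : ∀ i : ℕ, -(G + (τ ^ i * γ0) • (y i - x)) ∈ frechetSubdiff φ (y i) := by
    intro i ε hε
    have hball : Metric.ball (y i) (2 * ε / (τ ^ i * γ0)) ∈ nhds (y i) :=
      Metric.ball_mem_nhds _ (by positivity)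
    filter_upwards [hball] with z hz
    have hw : ‖z - y i‖ < 2 * ε / (τ ^ i * γ0) := by
      rw [← dist_eq_norm]; exact hz
    have hwΓ : ‖z - y i‖ * (τ ^ i * γ0) ≤ 2 * ε := (le_div_iff₀ (hγpos i)).1 hw.le
    have hmz := hyR i z
    rw [hp i, ← EReal.coe_add] at hmz
    have hsub := erealSubLe hmz
    rw [hp i, ← EReal.coe_add]
    refine le_trans (EReal.coe_le_coe_iff.2 ?_) hsub
    have hzx : z - x = (y i - x) + (z - y i) := by abel
    rw [hzx, norm_add_sq_real, inner_add_right]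
    simp only [inner_neg_left, inner_add_left, real_inner_smul_left]
    nlinarith [norm_nonneg (z - y i), real_inner_comm (y i - x) (z - y i), hγpos i]
  -- upper bound on p i
  have hpub : ∀ i : ℕ, p i ≤ px + ‖G‖ * ‖y i - x‖ := by
    intro i
    have h1 := hkey i
    have h5 := abs_real_inner_le_norm G (y i - x)
    have h7 := neg_abs_le (inner ℝ G (y i - x) : ℝ)
    nlinarith [norm_nonneg (y i - x), hγpos i, sq_nonneg ‖y i - x‖]
  by_cases hcase : ∀ c : ℝ, 0 < c → ∃ᶠ k in atTop, (τ ^ k * γ0) * ‖y k - x‖ < c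
  · -- Case A: subsequence with τ^k γ0 ‖d k‖ → 0 : contradiction with M-stationarity
    obtain ⟨e, hemono, he⟩ := extraction_forall_of_frequently
      (fun n : ℕ => hcase (1 / (n + 1)) (by positivity))
    have hetop : Tendsto e atTop atTop := hemono.tendsto_atTop
    have hu : Tendsto (fun n => y (e n)) atTop (nhds x) := hyto.comp hetop
    -- φ (y (e n)) → φ x
    have hpto : Tendsto (fun n => p (e n)) atTop (nhds px) := by
      rw [tendsto_order]
      constructor
      · intro c hc
        have hlt : (c : EReal) < φ x := by rw [hpx]; exact_mod_cast hc
        have := hu.eventually (hφlsc x c hlt)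
        filter_upwards [this] with n hn
        rw [hp (e n)] at hn
        exact_mod_cast hn
      · intro c hc
        have hd0 : Tendsto (fun n => ‖G‖ * ‖y (e n) - x‖) atTop (nhds 0) := by
          have := (hdto.comp hetop).const_mul ‖G‖
          simpa using this
        have hev : ∀ᶠ n in atTop, ‖G‖ * ‖y (e n) - x‖ < c - px :=
          hd0.eventually (eventually_lt_nhds (by linarith : (0:ℝ) < c - px))
        filter_upwards [hev] with n hn
        have := hpub (e n)
        linarith
    have hφu : Tendsto (fun n => φ (y (e n))) atTop (nhds (φ x)) := by
      rw [hpx]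
      have : (fun n => φ (y (e n))) = fun n => ((p (e n) : ℝ) : EReal) := by
        funext n; exact hp (e n)
      rw [this]
      exact EReal.tendsto_coe.2 hpto
    have hv : Tendsto (fun n => -(G + (τ ^ (e n) * γ0) • (y (e n) - x))) atTop (nhds (-G)) := by
      have hw0 : Tendsto (fun n => (τ ^ (e n) * γ0) • (y (e n) - x)) atTop (nhds 0) := by
        refine squeeze_zero_norm (a := fun (n : ℕ) => 1 / ((n : ℝ) + 1)) ?_
          tendsto_one_div_add_atTop_nhds_zero_nat
        intro n
        rw [norm_smul, Real.norm_eq_abs, abs_of_pos (hγpos (e n))]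
        exact (he n).le
      have hvv : Tendsto (fun n => -(G + (τ ^ (e n) * γ0) • (y (e n) - x))) atTop
          (nhds (-(G + 0))) := ((tendsto_const_nhds (x := G)).add hw0).neg
      simpa using hvv
    have hmem : -G ∈ limitingSubdiff φ x :=
      ⟨fun n => y (e n), fun n => -(G + (τ ^ (e n) * γ0) • (y (e n) - x)),
        hu, hφu, hv, fun n => hfre (e n)⟩
    exact hstat (by simpa using Set.add_mem_add (Set.mem_singleton G) hmem)
  · -- Case B: τ^k γ0 ‖d k‖ bounded below : contradiction with differentiability
    push_neg at hcase
    obtain ⟨c, hc0, hcev⟩ := hcase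
    simp only [← not_lt] at hcev
    have hdiff : DifferentiableAt ℝ f x := (hf.differentiable one_ne_zero) x
    have hlo := hasGradientAt_iff_isLittleO.1 hdiff.hasGradientAt
    have hε' : (0:ℝ) < (1 - δ) * c / 4 := by nlinarith [mul_pos (show (0:ℝ) < 1 - δ by linarith) hc0]
    have hbd := hyto.eventually (hlo.def hε')
    obtain ⟨k, h1, h2⟩ := (hcev.and hbd).exists
    push_neg at h1
    have h3 := hstar2 k
    have h4 : f (y k) - f x - (inner ℝ G (y k - x) : ℝ) ≤ (1 - δ) * c / 4 * ‖y k - x‖ := by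
      calc f (y k) - f x - (inner ℝ G (y k - x) : ℝ)
          ≤ ‖f (y k) - f x - (inner ℝ G (y k - x) : ℝ)‖ := le_abs_self _
        _ ≤ (1 - δ) * c / 4 * ‖y k - x‖ := h2
    nlinarith [mul_le_mul_of_nonneg_right h1 (norm_nonneg (y k - x)), norm_nonneg (y k - x)]
end

section
/- Let {xᵏ} be a sequence generated by the proximal gradient method. If ψ is bounded from below on dom φ and φ is bounded from below by an affine function, then ‖xᵏ⁺¹ − xᵏ‖ → 0 as k → ∞. -/
open Filter Topology Set Pointwise

variable {X : Type*} [NormedAddCommGroup X] [InnerProductSpace ℝ X] [FiniteDimensional ℝ X]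

/-- if `ψ` is bounded below on `dom φ` and `φ` is bounded below by an
affine function, then `‖x (k+1) - x k‖ → 0`. -/
theorem statement2
    (f : X → ℝ) (φ : X → EReal)
    (hf : ContDiff ℝ 1 f) (hφlsc : LowerSemicontinuous φ)
    (hφbot : ∀ z : X, φ z ≠ ⊥) (hproper : ∃ z : X, φ z ≠ ⊤)
    (τ γmin γmax δ : ℝ) (x : ℕ → X) (γ : ℕ → ℝ)
    (halg : ProxGrad f φ τ γmin γmax δ x γ)
    (hbdd : ∃ m : ℝ, ∀ z : X, φ z ≠ ⊤ → (m : EReal) ≤ psi f φ z)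
    (haff : ∃ a : X, ∃ b : ℝ, ∀ z : X, (((inner ℝ a z : ℝ) + b : ℝ) : EReal) ≤ φ z) :
    Tendsto (fun k => ‖x (k + 1) - x k‖) atTop (nhds 0) := by
  obtain ⟨m, hm⟩ := hbdd
  have hC : 0 < δ * γmin / 2 := by
    have h1 := halg.hdelta0; have h2 := halg.hgmin; positivity
  -- per-iteration key fact
  have key : ∀ k, φ (x k) ≠ ⊤ →
      φ (x (k + 1)) ≠ ⊤ ∧
      (psi f φ (x (k + 1))).toReal + δ * γmin / 2 * ‖x (k + 1) - x k‖ ^ 2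
        ≤ (psi f φ (x k)).toReal := by
    intro k hk
    obtain ⟨γ0, i, y, hγ0, hγ0', hmin, hacc, hfirst, hγk, hxy⟩ := halg.step k
    have hγmin : γmin ≤ τ ^ i * γ0 := by
      have h1 : (1:ℝ) ≤ τ ^ i := one_le_pow₀ halg.htau.le
      nlinarith [halg.hgmin, hγ0]
    have hc0 : δ * γmin / 2 * ‖y i - x k‖ ^ 2
        ≤ δ * (τ ^ i * γ0) / 2 * ‖y i - x k‖ ^ 2 := by
      apply mul_le_mul_of_nonneg_right _ (sq_nonneg _)
      have := halg.hdelta0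
      nlinarith
    set c : ℝ := δ * (τ ^ i * γ0) / 2 * ‖y i - x k‖ ^ 2 with hc
    have hbotk : φ (x k) ≠ ⊥ := hφbot _
    set p : ℝ := f (x k) + (φ (x k)).toReal with hp
    have hk' : psi f φ (x k) = (p : EReal) := by
      show (f (x k) : EReal) + φ (x k) = _
      rw [hp, EReal.coe_add]
      congr 1
      exact (EReal.coe_toReal hk hbotk).symm
    rw [hk', ← EReal.coe_sub] at hacc
    have htopy : φ (y i) ≠ ⊤ := by
      intro h
      have : psi f φ (y i) = ⊤ := by
        show (f (y i) : EReal) + φ (y i) = ⊤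
        rw [h, EReal.add_top_of_ne_bot (EReal.coe_ne_bot _)]
      rw [this, top_le_iff] at hacc
      exact EReal.coe_ne_top _ hacc
    set q : ℝ := f (y i) + (φ (y i)).toReal with hq
    have hy' : psi f φ (y i) = (q : EReal) := by
      show (f (y i) : EReal) + φ (y i) = _
      rw [hq, EReal.coe_add]
      congr 1
      exact (EReal.coe_toReal htopy (hφbot _)).symm
    rw [hy', EReal.coe_le_coe_iff] at hacc
    refine ⟨by rw [hxy]; exact htopy, ?_⟩
    have hxk1 : (psi f φ (x (k + 1))).toReal = q := by
      rw [hxy, hy', EReal.toReal_coe]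
    have hxk : (psi f φ (x k)).toReal = p := by rw [hk', EReal.toReal_coe]
    rw [hxk1, hxk, hxy]
    linarith
  -- all iterates are in dom φ
  have htop : ∀ k, φ (x k) ≠ ⊤ := by
    intro k
    induction k with
    | zero => exact halg.hx0
    | succ n ih => exact (key n ih).1
  set u : ℕ → ℝ := fun k => (psi f φ (x k)).toReal with hu
  have hstep : ∀ k, u (k + 1) + δ * γmin / 2 * ‖x (k + 1) - x k‖ ^ 2 ≤ u k :=
    fun k => (key k (htop k)).2
  have hanti : Antitone u := antitone_nat_of_succ_le fun k => by
    have := hstep k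
    nlinarith [sq_nonneg ‖x (k + 1) - x k‖, hC]
  have hlb : ∀ k, m ≤ u k := by
    intro k
    have h1 := hm (x k) (htop k)
    have h2 : psi f φ (x k) = ((f (x k) + (φ (x k)).toReal : ℝ) : EReal) := by
      show (f (x k) : EReal) + φ (x k) = _
      rw [EReal.coe_add]
      congr 1
      exact (EReal.coe_toReal (htop k) (hφbot _)).symm
    rw [h2] at h1
    have h3 : u k = f (x k) + (φ (x k)).toReal := by
      show (psi f φ (x k)).toReal = _
      rw [h2, EReal.toReal_coe]
    rw [h3]
    exact EReal.coe_le_coe_iff.mp h1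
  have hbdd' : BddBelow (Set.range u) := ⟨m, by rintro _ ⟨k, rfl⟩; exact hlb k⟩
  have hconv : Tendsto u atTop (nhds (⨅ k, u k)) :=
    tendsto_atTop_ciInf hanti hbdd'
  have hconv' : Tendsto (fun k => u (k + 1)) atTop (nhds (⨅ k, u k)) :=
    hconv.comp (tendsto_add_atTop_nat 1)
  have hdiff : Tendsto (fun k => u k - u (k + 1)) atTop (nhds 0) := by
    have := hconv.sub hconv'
    simpa using this
  have hsq : Tendsto (fun k => ‖x (k + 1) - x k‖ ^ 2) atTop (nhds 0) := by
    apply squeeze_zero (fun k => sq_nonneg _)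
      (g := fun k => (u k - u (k + 1)) / (δ * γmin / 2))
    · intro k
      have := hstep k
      rw [le_div_iff₀ hC]
      linarith
    · simpa using hdiff.div_const (δ * γmin / 2)
  have hcomp := (Real.continuous_sqrt.tendsto 0).comp hsq
  rw [Real.sqrt_zero] at hcomp
  have h4 : (fun k => ‖x (k + 1) - x k‖)
      = (fun t => Real.sqrt t) ∘ (fun k => ‖x (k + 1) - x k‖ ^ 2) := by
    funext k
    simp [Function.comp, Real.sqrt_sq (norm_nonneg _)]
  rw [h4]
  exact hcomp
end

section
/- Let {xᵏ} be a sequence generated by the proximal gradient method, and suppose ψ is bounded from below on dom φ and φ is bounded from below by an affine function. Then for any subsequence {xᵏ}_{k∈K} converging to some point in X, one has γₖ‖xᵏ⁺¹ − xᵏ‖ → 0 as k → ∞ along K. -/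
open Filter Topology Set Pointwise

variable {X : Type*} [NormedAddCommGroup X] [InnerProductSpace ℝ X] [FiniteDimensional ℝ X]

set_option linter.unusedSectionVars false

lemma psi_real {f : X → ℝ} {φ : X → EReal} {w : X} (hbot : φ w ≠ ⊥) (htop : φ w ≠ ⊤) :
    psi f φ w = ((f w + (φ w).toReal : ℝ) : EReal) := by
  show (f w : EReal) + φ w = _
  rw [EReal.coe_add]
  exact congrArg (fun t => (f w : EReal) + t) (EReal.coe_toReal htop hbot).symm

lemma prox_finite {f : X → ℝ} {φ : X → EReal} (hbot : ∀ z, φ z ≠ ⊥) {x0 : X}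
    (hx : φ x0 ≠ ⊤) {c : ℝ} {w : X}
    (hw : proxModel f φ x0 c w ≤ proxModel f φ x0 c x0) : φ w ≠ ⊤ := by
  intro hw_top
  have h1 : proxModel f φ x0 c x0 ≠ ⊤ := by
    simp only [proxModel]
    rw [← EReal.coe_toReal hx (hbot x0), ← EReal.coe_add]
    exact EReal.coe_ne_top _
  have h2 := ne_top_of_le_ne_top h1 hw
  apply h2
  simp only [proxModel, hw_top]
  exact EReal.add_top_of_ne_bot (EReal.coe_ne_bot _)

lemma prox_le_real {f : X → ℝ} {φ : X → EReal} (hbot : ∀ z, φ z ≠ ⊥) {x0 : X} {c : ℝ}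
    {w z : X} (hw : φ w ≠ ⊤) (hz : φ z ≠ ⊤)
    (h : proxModel f φ x0 c w ≤ proxModel f φ x0 c z) :
    f x0 + (inner ℝ (gradient f x0) (w - x0) : ℝ) + c / 2 * ‖w - x0‖ ^ 2 + (φ w).toReal ≤
    f x0 + (inner ℝ (gradient f x0) (z - x0) : ℝ) + c / 2 * ‖z - x0‖ ^ 2 + (φ z).toReal := by
  simp only [proxModel] at h
  rw [← EReal.coe_toReal hw (hbot w), ← EReal.coe_toReal hz (hbot z),
    ← EReal.coe_add, ← EReal.coe_add, EReal.coe_le_coe_iff] at h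
  linarith

lemma grad_inner_eq {f : X → ℝ} (x0 v : X) :
    (inner ℝ (gradient f x0) v : ℝ) = fderiv ℝ f x0 v := by
  rw [show gradient f x0 = (InnerProductSpace.toDual ℝ X).symm (fderiv ℝ f x0) from rfl]
  exact InnerProductSpace.toDual_symm_apply

lemma grad_cont {f : X → ℝ} (hf : ContDiff ℝ 1 f) : Continuous (gradient f) := by
  have h1 : Continuous (fderiv ℝ f) := hf.continuous_fderiv one_ne_zero
  exact ((InnerProductSpace.toDual ℝ X).symm.continuous.comp h1 : _)



set_option maxHeartbeats 2000000 in
/-- along any convergent subsequence, `γ k * ‖x (k+1) - x k‖ → 0`. -/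
theorem statement3
    (f : X → ℝ) (φ : X → EReal)
    (hf : ContDiff ℝ 1 f) (hφlsc : LowerSemicontinuous φ)
    (hφbot : ∀ z : X, φ z ≠ ⊥) (hproper : ∃ z : X, φ z ≠ ⊤)
    (τ γmin γmax δ : ℝ) (x : ℕ → X) (γ : ℕ → ℝ)
    (halg : ProxGrad f φ τ γmin γmax δ x γ)
    (hbdd : ∃ m : ℝ, ∀ z : X, φ z ≠ ⊤ → (m : EReal) ≤ psi f φ z)
    (haff : ∃ a : X, ∃ b : ℝ, ∀ z : X, (((inner ℝ a z : ℝ) + b : ℝ) : EReal) ≤ φ z)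
    (σ : ℕ → ℕ) (hσ : StrictMono σ) (xbar : X)
    (hconv : Tendsto (fun k => x (σ k)) atTop (nhds xbar)) :
    Tendsto (fun k => γ (σ k) * ‖x (σ k + 1) - x (σ k)‖) atTop (nhds 0) := by
  obtain ⟨m, hm⟩ := hbdd
  obtain ⟨a, b, hab⟩ := haff
  choose γ0 i y hγ01 hγ02 hmin hacc hrej hγk hx1 using halg.step
  have htau := halg.htau
  have hδ0 := halg.hdelta0
  have hδ1 := halg.hdelta1
  have htau0 : (0:ℝ) < τ := lt_trans one_pos htau
  have hγ0pos : ∀ k, 0 < γ0 k := fun k => lt_of_lt_of_le halg.hgmin (hγ01 k)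
  have hγpos : ∀ k, 0 < γ k := fun k =>
    (hγk k) ▸ mul_pos (pow_pos htau0 _) (hγ0pos k)
  have φfin : ∀ k, φ (x k) ≠ ⊤ := by
    intro k
    induction k with
    | zero => exact halg.hx0
    | succ k ih =>
      rw [hx1 k]
      exact prox_finite hφbot ih (hmin k (i k) le_rfl (x k))
  have φfin' : ∀ k, ∀ j ≤ i k, φ (y k j) ≠ ⊤ := fun k j hj =>
    prox_finite hφbot (φfin k) (hmin k j hj (x k))
  set Ψ : ℕ → ℝ := fun k => f (x k) + (φ (x k)).toReal with hΨdef
  have hpsix : ∀ k, psi f φ (x k) = ((Ψ k : ℝ) : EReal) := fun k =>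
    psi_real (hφbot _) (φfin k)
  have hΨeq : ∀ k, Ψ k = f (x k) + (φ (x k)).toReal := fun k => rfl
  clear_value Ψ
  have hΨdec : ∀ k, Ψ (k+1) + δ * γ k / 2 * ‖x (k+1) - x k‖^2 ≤ Ψ k := by
    intro k
    have h := hacc k
    rw [← hγk k, ← hx1 k, hpsix k, hpsix (k+1)] at h
    rw [← EReal.coe_sub, EReal.coe_le_coe_iff] at h
    linarith
  have hΨlb : ∀ k, m ≤ Ψ k := by
    intro k
    have := hm (x k) (φfin k)
    rw [hpsix k, EReal.coe_le_coe_iff] at this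
    exact this
  have hcnonneg : ∀ k, 0 ≤ δ * γ k / 2 * ‖x (k+1) - x k‖^2 := fun k =>
    mul_nonneg (div_nonneg (mul_nonneg hδ0.le (hγpos k).le) two_pos.le) (sq_nonneg _)
  have hΨanti : Antitone Ψ := antitone_nat_of_succ_le fun k =>
    le_trans (le_add_of_nonneg_right (hcnonneg k)) (hΨdec k)
  have hΨtend : Tendsto Ψ atTop (𝓝 (⨅ k, Ψ k)) :=
    tendsto_atTop_ciInf hΨanti ⟨m, by rintro r ⟨k, rfl⟩; exact hΨlb k⟩
  have hdiff0 : Tendsto (fun k => Ψ k - Ψ (k+1)) atTop (𝓝 0) := by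
    have h2 : Tendsto (fun k => Ψ (k+1)) atTop (𝓝 (⨅ k, Ψ k)) :=
      hΨtend.comp (tendsto_add_atTop_nat 1)
    simpa using hΨtend.sub h2
  have hq : Tendsto (fun k => γ k * ‖x (k+1) - x k‖^2) atTop (𝓝 0) := by
    have hub : ∀ k, γ k * ‖x (k+1) - x k‖^2 ≤ 2/δ * (Ψ k - Ψ (k+1)) := by
      intro k
      have h := hΨdec k
      rw [div_mul_eq_mul_div, le_div_iff₀ hδ0]
      nlinarith [h]
    have hlb : ∀ k, 0 ≤ γ k * ‖x (k+1) - x k‖^2 := fun k =>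
      mul_nonneg (hγpos k).le (sq_nonneg _)
    have h2 : Tendsto (fun k => 2/δ * (Ψ k - Ψ (k+1))) atTop (𝓝 0) := by
      simpa using hdiff0.const_mul (2/δ)
    exact tendsto_of_tendsto_of_tendsto_of_le_of_le tendsto_const_nhds h2 hlb hub
  -- contradiction setup
  by_contra hcon
  obtain ⟨ε, hε, hfreq⟩ : ∃ ε > 0, ∃ᶠ n in atTop, ε ≤ γ (σ n) * ‖x (σ n + 1) - x (σ n)‖ := by
    rw [Metric.tendsto_atTop] at hcon
    push_neg at hcon
    obtain ⟨ε, hε, hcon⟩ := hcon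
    refine ⟨ε, hε, ?_⟩
    rw [frequently_atTop]
    intro N
    obtain ⟨n, hn, h⟩ := hcon N
    refine ⟨n, hn, ?_⟩
    rw [Real.dist_eq, sub_zero] at h
    have hnn : 0 ≤ γ (σ n) * ‖x (σ n + 1) - x (σ n)‖ :=
      mul_nonneg (hγpos _).le (norm_nonneg _)
    rwa [abs_of_nonneg hnn] at h
  obtain ⟨ρ, hρmono, hρ⟩ := extraction_of_frequently_atTop hfreq
  set k : ℕ → ℕ := fun n => σ (ρ n) with hkdef
  have hkmono : StrictMono k := hσ.comp hρmono
  have hxk : Tendsto (fun n => x (k n)) atTop (𝓝 xbar) := hconv.comp hρmono.tendsto_atTop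
  have hεk : ∀ n, ε ≤ γ (k n) * ‖x (k n + 1) - x (k n)‖ := hρ
  have hd0 : Tendsto (fun n => γ (k n) * ‖x (k n + 1) - x (k n)‖ ^ 2) atTop (𝓝 0) :=
    hq.comp hkmono.tendsto_atTop
  have hdpos : ∀ n, 0 < γ (k n) * ‖x (k n + 1) - x (k n)‖ ^ 2 := by
    intro n
    have h1 : 0 < ‖x (k n + 1) - x (k n)‖ := by
      rcases (norm_nonneg (x (k n + 1) - x (k n))).lt_or_eq with h | h
      · exact h
      · exfalso
        have h2 := hεk n
        rw [← h, mul_zero] at h2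
        linarith
    exact mul_pos (hγpos _) (pow_pos h1 2)
  have hγtop : Tendsto (fun n => γ (k n)) atTop atTop := by
    have h1 : Tendsto (fun n => γ (k n) * ‖x (k n + 1) - x (k n)‖ ^ 2) atTop (𝓝[>] 0) :=
      tendsto_nhdsWithin_of_tendsto_nhds_of_eventually_within _ hd0
        (Eventually.of_forall hdpos)
    have h3 : Tendsto (fun n => ε ^ 2 * (γ (k n) * ‖x (k n + 1) - x (k n)‖ ^ 2)⁻¹)
        atTop atTop := (h1.inv_tendsto_nhdsGT_zero).const_mul_atTop (by positivity)
    apply tendsto_atTop_mono _ h3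
    intro n
    have h4 : ε ^ 2 ≤ γ (k n) * (γ (k n) * ‖x (k n + 1) - x (k n)‖ ^ 2) := by
      nlinarith [hεk n, hε.le, (hγpos (k n)).le, norm_nonneg (x (k n + 1) - x (k n))]
    calc ε ^ 2 * (γ (k n) * ‖x (k n + 1) - x (k n)‖ ^ 2)⁻¹
        ≤ (γ (k n) * (γ (k n) * ‖x (k n + 1) - x (k n)‖ ^ 2)) *
          (γ (k n) * ‖x (k n + 1) - x (k n)‖ ^ 2)⁻¹ :=
          mul_le_mul_of_nonneg_right h4 (inv_nonneg.mpr (hdpos n).le)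
      _ = γ (k n) := by
          rw [mul_assoc, mul_inv_cancel₀ (hdpos n).ne']
          exact mul_one _
  have hi1 : ∀ᶠ n in atTop, 1 ≤ i (k n) := by
    filter_upwards [hγtop.eventually_gt_atTop γmax] with n hn
    by_contra h
    push_neg at h
    have h0 : i (k n) = 0 := Nat.lt_one_iff.mp h
    have := hγk (k n)
    rw [h0, pow_zero, one_mul] at this
    rw [this] at hn
    exact absurd (hγ02 (k n)) (not_le.mpr hn)
  -- the rejected trial point
  set w : ℕ → X := fun n => y (k n) (i (k n) - 1) with hwdef
  set g : ℕ → ℝ := fun n => τ ^ (i (k n) - 1) * γ0 (k n) with hgdef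
  set t : ℕ → ℝ := fun n => ‖w n - x (k n)‖ with htdef
  have hgpos : ∀ n, 0 < g n := fun n => mul_pos (pow_pos htau0 _) (hγ0pos _)
  have hgmin' : ∀ n, γmin ≤ g n := fun n =>
    le_trans (hγ01 _) (le_mul_of_one_le_left (hγ0pos _).le (one_le_pow₀ htau.le))
  have hγg : ∀ n, 1 ≤ i (k n) → γ (k n) = τ * g n := by
    intro n hn
    rw [hγk (k n), hgdef]
    rw [← mul_assoc, ← pow_succ', Nat.sub_add_cancel hn]
  have hwfin : ∀ n, φ (w n) ≠ ⊤ := fun n => φfin' (k n) _ (Nat.sub_le _ _)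
  have hteq : ∀ n, t n = ‖w n - x (k n)‖ := fun n => rfl
  have htnn : ∀ n, 0 ≤ t n := fun n => norm_nonneg _
  have hAst : ∀ n, (inner ℝ (gradient f (x (k n))) (w n - x (k n)) : ℝ)
      + g n / 2 * t n ^ 2 + (φ (w n)).toReal ≤ (φ (x (k n))).toReal := by
    intro n
    have h := prox_le_real hφbot (hwfin n) (φfin (k n))
      (hmin (k n) (i (k n) - 1) (Nat.sub_le _ _) (x (k n)))
    have h' : f (x (k n)) + (inner ℝ (gradient f (x (k n))) (w n - x (k n)) : ℝ)
        + g n / 2 * ‖w n - x (k n)‖ ^ 2 + (φ (w n)).toReal ≤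
        f (x (k n)) + (inner ℝ (gradient f (x (k n))) (x (k n) - x (k n)) : ℝ)
        + g n / 2 * ‖x (k n) - x (k n)‖ ^ 2 + (φ (x (k n))).toReal := h
    simp only [sub_self, inner_zero_right, norm_zero] at h'
    rw [hteq n]
    nlinarith [h']
  have hrej' : ∀ n, 1 ≤ i (k n) →
      Ψ (k n) - δ * g n / 2 * t n ^ 2 < f (w n) + (φ (w n)).toReal := by
    intro n hn
    have h := hrej (k n) (i (k n) - 1) (Nat.sub_lt hn one_pos)
    have h' : ¬ psi f φ (w n) ≤ psi f φ (x (k n)) -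
        ((δ * (g n) / 2 * ‖w n - x (k n)‖ ^ 2 : ℝ) : EReal) := by
      intro hc
      apply h
      convert hc using 4 <;> rw [hgdef] <;> ring
    rw [psi_real (hφbot _) (hwfin n), hpsix (k n), ← EReal.coe_sub] at h'
    rw [not_le, EReal.coe_lt_coe_iff] at h'
    rw [hteq n]
    linarith
  have hφwlb : ∀ n, (inner ℝ a (w n) : ℝ) + b ≤ (φ (w n)).toReal := by
    intro n
    have h1 := hab (w n)
    rw [← EReal.coe_toReal (hwfin n) (hφbot (w n)), EReal.coe_le_coe_iff] at h1
    exact h1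
  -- comparison between accepted and rejected steps
  have hcomp : ∀ n, 1 ≤ i (k n) → ‖x (k n + 1) - x (k n)‖ ≤ t n := by
    intro n hn
    have hxfin : φ (x (k n + 1)) ≠ ⊤ := φfin (k n + 1)
    have h1 := prox_le_real hφbot ((hx1 (k n)) ▸ hxfin) (hwfin n)
      (hmin (k n) (i (k n)) le_rfl (w n))
    have h1' : f (x (k n)) + (inner ℝ (gradient f (x (k n))) (x (k n + 1) - x (k n)) : ℝ)
        + γ (k n) / 2 * ‖x (k n + 1) - x (k n)‖ ^ 2 + (φ (x (k n + 1))).toReal ≤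
        f (x (k n)) + (inner ℝ (gradient f (x (k n))) (w n - x (k n)) : ℝ)
        + γ (k n) / 2 * ‖w n - x (k n)‖ ^ 2 + (φ (w n)).toReal := by
      have e : τ ^ (i (k n)) * γ0 (k n) = γ (k n) := (hγk (k n)).symm
      rw [← e, hx1 (k n)]
      exact h1
    have h2 := prox_le_real hφbot (hwfin n) ((hx1 (k n)) ▸ hxfin)
      (hmin (k n) (i (k n) - 1) (Nat.sub_le _ _) (x (k n + 1)))
    have h2' : f (x (k n)) + (inner ℝ (gradient f (x (k n))) (w n - x (k n)) : ℝ)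
        + g n / 2 * ‖w n - x (k n)‖ ^ 2 + (φ (w n)).toReal ≤
        f (x (k n)) + (inner ℝ (gradient f (x (k n))) (x (k n + 1) - x (k n)) : ℝ)
        + g n / 2 * ‖x (k n + 1) - x (k n)‖ ^ 2 + (φ (x (k n + 1))).toReal := by
      rw [hx1 (k n)] at h2 ⊢
      exact h2
    have hgγ : g n < γ (k n) := by
      rw [hγg n hn]
      nlinarith [hgpos n]
    have hsq : ‖x (k n + 1) - x (k n)‖ ^ 2 ≤ ‖w n - x (k n)‖ ^ 2 := by nlinarith
    have := Real.sqrt_le_sqrt hsq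
    rwa [Real.sqrt_sq (norm_nonneg _), Real.sqrt_sq (norm_nonneg _)] at this
  clear_value w g t
  -- eventual bounds along the subsequence
  have hgc : Continuous (gradient f) := grad_cont hf
  have hE1 : ∀ᶠ n in atTop, ‖x (k n) - xbar‖ ≤ 1 := by
    have := hxk.eventually (Metric.closedBall_mem_nhds xbar one_pos)
    filter_upwards [this] with n hn
    simpa [Metric.mem_closedBall, dist_eq_norm] using hn
  have hE2 : ∀ᶠ n in atTop, ‖gradient f (x (k n))‖ ≤ ‖gradient f xbar‖ + 1 := by
    have h1 : Tendsto (fun n => ‖gradient f (x (k n))‖) atTop (𝓝 ‖gradient f xbar‖) :=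
      ((continuous_norm.comp hgc).tendsto xbar).comp hxk
    exact h1.eventually (eventually_le_nhds (lt_add_one _))
  have hE3 : ∀ᶠ n in atTop, f xbar - 1 ≤ f (x (k n)) := by
    have h1 : Tendsto (fun n => f (x (k n))) atTop (𝓝 (f xbar)) :=
      ((hf.continuous).tendsto xbar).comp hxk
    exact h1.eventually (eventually_ge_nhds (by linarith))
  have hE4 : ∀ᶠ n in atTop, (inner ℝ a xbar : ℝ) - 1 ≤ (inner ℝ a (x (k n)) : ℝ) := by
    have h1 : Tendsto (fun n => (inner ℝ a (x (k n)) : ℝ)) atTop (𝓝 (inner ℝ a xbar : ℝ)) :=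
      ((continuous_const.inner continuous_id).tendsto xbar).comp hxk
    exact h1.eventually (eventually_ge_nhds (by linarith))
  set C0 : ℝ := (Ψ 0 - (f xbar - 1)) - ((inner ℝ a xbar : ℝ) - 1) - b with hC0def
  set C1 : ℝ := ‖a‖ + (‖gradient f xbar‖ + 1) with hC1def
  have hC1 : 0 ≤ C1 := by positivity
  clear_value C1
  have hφxub : ∀ n, (φ (x (k n))).toReal ≤ Ψ 0 - f (x (k n)) := by
    intro n
    have h1 : Ψ (k n) ≤ Ψ 0 := hΨanti (Nat.zero_le _)
    rw [hΨeq (k n)] at h1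
    linarith
  have hquad : ∀ᶠ n in atTop, g n / 2 * t n ^ 2 ≤ |C0| + C1 * t n := by
    filter_upwards [hE2, hE3, hE4] with n h2 h3 h4
    have hA := hAst n
    have hI1 : -(‖gradient f (x (k n))‖ * t n) ≤
        (inner ℝ (gradient f (x (k n))) (w n - x (k n)) : ℝ) := by
      have h5 := abs_real_inner_le_norm (gradient f (x (k n))) (w n - x (k n))
      have h6 := neg_abs_le (inner ℝ (gradient f (x (k n))) (w n - x (k n)) : ℝ)
      rw [hteq n]
      linarith
    have hI2 : (inner ℝ a (x (k n)) : ℝ) - ‖a‖ * t n ≤ (inner ℝ a (w n) : ℝ) := by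
      have h7 : (inner ℝ a (w n) : ℝ) =
          (inner ℝ a (x (k n)) : ℝ) + (inner ℝ a (w n - x (k n)) : ℝ) := by
        rw [← inner_add_right]
        norm_num
      have h5 := abs_real_inner_le_norm a (w n - x (k n))
      have h6 := neg_abs_le (inner ℝ a (w n - x (k n)) : ℝ)
      rw [h7, hteq n]
      linarith
    have p1 : ‖gradient f (x (k n))‖ * t n ≤ (‖gradient f xbar‖ + 1) * t n :=
      mul_le_mul_of_nonneg_right h2 (htnn n)
    have p2 : C0 ≤ |C0| := le_abs_self _
    have p3 := hφwlb n
    have p4 := hφxub n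
    have p2' : (Ψ 0 - (f xbar - 1)) - ((inner ℝ a xbar : ℝ) - 1) - b ≤ |C0| := by
      rw [hC0def] at p2; exact p2
    have q1 : C1 * t n = ‖a‖ * t n + (‖gradient f xbar‖ + 1) * t n := by
      rw [hC1def]; ring
    linarith [hA, hI1, hI2, p1, p2', p3, p4, h3, h4, q1]
  clear_value C0
  set T : ℝ := max 1 (2 * (|C0| + C1) / γmin) with hTdef
  have hT : ∀ᶠ n in atTop, t n ≤ T := by
    filter_upwards [hquad] with n h1
    rcases le_or_gt (t n) 1 with h | h
    · exact le_trans h (le_max_left _ _)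
    · refine le_trans ?_ (le_max_right _ _)
      rw [le_div_iff₀ halg.hgmin]
      have e1 : γmin * t n ^ 2 ≤ g n * t n ^ 2 :=
        mul_le_mul_of_nonneg_right (hgmin' n) (sq_nonneg _)
      have e2 : g n * t n ^ 2 ≤ 2 * |C0| + 2 * C1 * t n := by linarith
      have e3 : 2 * |C0| ≤ 2 * |C0| * t n := by
        nlinarith [abs_nonneg C0]
      have e4 : (γmin * t n) * t n ≤ (2 * |C0| + 2 * C1) * t n := by nlinarith
      have h5 := le_of_mul_le_mul_right e4 (lt_trans one_pos h)
      linarith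
  clear_value T
  have hgt : Tendsto g atTop atTop := by
    have h1 : Tendsto (fun n => γ (k n) / τ) atTop atTop := hγtop.atTop_div_const htau0
    apply h1.congr'
    filter_upwards [hi1] with n hn
    rw [hγg n hn]
    field_simp
  have ht2 : ∀ᶠ n in atTop, t n ^ 2 ≤ 2 * (|C0| + C1 * T) / g n := by
    filter_upwards [hquad, hT] with n h1 h2
    rw [le_div_iff₀ (hgpos n)]
    have p5 : C1 * t n ≤ C1 * T := mul_le_mul_of_nonneg_left h2 hC1
    linarith [h1, p5]
  have ht0 : Tendsto t atTop (𝓝 0) := by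
    have hup : Tendsto (fun n => 2 * (|C0| + C1 * T) / g n) atTop (𝓝 0) :=
      tendsto_const_nhds.div_atTop hgt
    have hsq : Tendsto (fun n => t n ^ 2) atTop (𝓝 0) :=
      tendsto_of_tendsto_of_tendsto_of_le_of_le' tendsto_const_nhds hup
        (Eventually.of_forall fun n => sq_nonneg _) ht2
    have h1 : Tendsto (fun n => Real.sqrt (t n ^ 2)) atTop (𝓝 0) := by
      have := (Real.continuous_sqrt.tendsto' 0 0 Real.sqrt_zero).comp hsq
      exact this
    apply h1.congr
    intro n
    rw [Real.sqrt_sq (htnn n)]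
  have hwten : Tendsto w atTop (𝓝 xbar) := by
    have h1 : Tendsto (fun n => w n - x (k n)) atTop (𝓝 0) := by
      rw [tendsto_zero_iff_norm_tendsto_zero]
      exact ht0.congr fun n => hteq n
    have h2 := h1.add hxk
    rw [zero_add] at h2
    apply h2.congr
    intro n
    abel
  -- g n * t n → 0 via uniform continuity of the derivative
  have hgt0 : Tendsto (fun n => g n * t n) atTop (𝓝 0) := by
    rw [Metric.tendsto_atTop]
    intro e he
    have h1δ : (0:ℝ) < 1 - δ := by linarith
    set ε' : ℝ := (1 - δ) * e / 8 with hε'def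
    have hε'pos : 0 < ε' := by
      rw [hε'def]
      positivity
    have hFcont : Continuous (fderiv ℝ f) := hf.continuous_fderiv one_ne_zero
    have hK : IsCompact (Metric.closedBall xbar 2) := isCompact_closedBall xbar 2
    have hUC := hK.uniformContinuousOn_of_continuous hFcont.continuousOn
    rw [Metric.uniformContinuousOn_iff] at hUC
    obtain ⟨δ', hδ'pos, hδ'⟩ := hUC ε' hε'pos
    have hE5 : ∀ᶠ n in atTop, t n < min δ' 1 :=
      ht0.eventually (eventually_lt_nhds (lt_min hδ'pos one_pos))
    have hAll : ∀ᶠ n in atTop,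
        (1 ≤ i (k n)) ∧ ‖x (k n) - xbar‖ ≤ 1 ∧ t n < min δ' 1 := by
      filter_upwards [hi1, hE1, hE5] with n a1 a2 a3
      exact ⟨a1, a2, a3⟩
    rw [eventually_atTop] at hAll
    obtain ⟨N, hN⟩ := hAll
    refine ⟨N, fun n hn => ?_⟩
    obtain ⟨h1, hB, h5⟩ := hN n hn
    -- mean value estimate on the ball of radius t n around x (k n)
    have hcv : Convex ℝ (Metric.closedBall (x (k n)) (t n)) := convex_closedBall _ _
    have hxs : x (k n) ∈ Metric.closedBall (x (k n)) (t n) :=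
      Metric.mem_closedBall_self (htnn n)
    have hws : w n ∈ Metric.closedBall (x (k n)) (t n) := by
      rw [Metric.mem_closedBall, dist_eq_norm, ← hteq n]
    have hbound : ∀ u ∈ Metric.closedBall (x (k n)) (t n),
        ‖fderiv ℝ f u - fderiv ℝ f (x (k n))‖ ≤ ε' := by
      intro u hu
      rw [Metric.mem_closedBall] at hu
      have hu2 : u ∈ Metric.closedBall xbar 2 := by
        rw [Metric.mem_closedBall]
        have := dist_triangle u (x (k n)) xbar
        rw [dist_eq_norm (x (k n)) xbar] at this
        have h6 : t n ≤ 1 := le_of_lt (lt_of_lt_of_le h5 (min_le_right _ _))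
        linarith
      have hx2 : x (k n) ∈ Metric.closedBall xbar 2 := by
        rw [Metric.mem_closedBall, dist_eq_norm]
        linarith
      have hdd : dist u (x (k n)) < δ' :=
        lt_of_le_of_lt hu (lt_of_lt_of_le h5 (min_le_left _ _))
      have := hδ' u hu2 (x (k n)) hx2 hdd
      rw [dist_eq_norm] at this
      exact this.le
    have hder : ∀ u ∈ Metric.closedBall (x (k n)) (t n),
        HasFDerivWithinAt f (fderiv ℝ f u) (Metric.closedBall (x (k n)) (t n)) u :=
      fun u _ => (hf.differentiable one_ne_zero u).hasFDerivAt.hasFDerivWithinAt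
    have hMVT := hcv.norm_image_sub_le_of_norm_hasFDerivWithin_le' hder hbound hxs hws
    have hgi := grad_inner_eq (f := f) (x (k n)) (w n - x (k n))
    have hMVT' : f (w n) - f (x (k n))
        - (inner ℝ (gradient f (x (k n))) (w n - x (k n)) : ℝ) ≤ ε' * t n := by
      rw [hgi, hteq n]
      rw [Real.norm_eq_abs] at hMVT
      calc f (w n) - f (x (k n)) - (fderiv ℝ f (x (k n))) (w n - x (k n))
          ≤ |f (w n) - f (x (k n)) - (fderiv ℝ f (x (k n))) (w n - x (k n))| := le_abs_self _
        _ ≤ ε' * ‖w n - x (k n)‖ := hMVT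
    have hA := hAst n
    have hR := hrej' n h1
    have hΨn := hΨeq (k n)
    have hkey : (1 - δ) * (g n / 2) * t n ^ 2 < ε' * t n := by
      linarith [hR, hA, hMVT', hΨn]
    have hgtn : g n * t n < e := by
      rcases (htnn n).eq_or_lt with h0 | h0
      · rw [← h0, mul_zero]; exact he
      · have hkey' := hkey
        rw [pow_two, ← mul_assoc] at hkey'
        have h8 := lt_of_mul_lt_mul_right hkey' (htnn n)
        rw [hε'def] at h8
        nlinarith [h8, h1δ, he, mul_nonneg (hgpos n).le (htnn n)]
    rw [Real.dist_eq, sub_zero, abs_of_nonneg (mul_nonneg (hgpos n).le (htnn n))]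
    exact hgtn
  -- final contradiction
  have hfinal : Tendsto (fun n => γ (k n) * ‖x (k n + 1) - x (k n)‖) atTop (𝓝 0) := by
    have hub : ∀ᶠ n in atTop, γ (k n) * ‖x (k n + 1) - x (k n)‖ ≤ τ * (g n * t n) := by
      filter_upwards [hi1] with n hn
      rw [hγg n hn, mul_assoc]
      exact mul_le_mul_of_nonneg_left
        (mul_le_mul_of_nonneg_left (hcomp n hn) (hgpos n).le) htau0.le
    have h2 : Tendsto (fun n => τ * (g n * t n)) atTop (𝓝 0) := by
      simpa using hgt0.const_mul τ
    exact tendsto_of_tendsto_of_tendsto_of_le_of_le' tendsto_const_nhds h2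
      (Eventually.of_forall fun n => mul_nonneg (hγpos _).le (norm_nonneg _)) hub
  have hlast := hfinal.eventually (eventually_lt_nhds hε)
  rw [eventually_atTop] at hlast
  obtain ⟨N, hN⟩ := hlast
  exact absurd (hεk N) (not_le.mpr (hN N le_rfl))
end

section
/- Let {xᵏ}, {γₖ} be sequences generated by the proximal gradient method, suppose Assumption A holds, and let x* be an accumulation point of {xᵏ}. Then for every ρ > 0 there exists a constant γ̄_ρ > 0 such that γₖ ≤ γ̄_ρ for every k ∈ ℕ with xᵏ ∈ B_ρ(x*), where B_ρ(x*) denotes the closed ball of radius ρ around x*. -/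
open Filter Topology Set Pointwise

variable {X : Type*} [NormedAddCommGroup X] [InnerProductSpace ℝ X] [FiniteDimensional ℝ X]

section AuxiliaryLemmas

/-- A locally Lipschitz map is Lipschitz on compact sets. -/
lemma locLip_compact {X Y : Type*} [MetricSpace X] [MetricSpace Y]
    {g : X → Y} (hg : LocallyLipschitz g) {K : Set X} (hK : IsCompact K) :
    ∃ L : ℝ, 0 ≤ L ∧ ∀ x ∈ K, ∀ y ∈ K, dist (g x) (g y) ≤ L * dist x y := by
  by_contra h
  push_neg at h
  choose u hu v hv hd using fun n : ℕ => h n (Nat.cast_nonneg n)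
  obtain ⟨z, hz, σ, hσ, huz⟩ := hK.tendsto_subseq hu
  obtain ⟨D, hD⟩ := Metric.isBounded_iff.1 (hK.image hg.continuous).isBounded
  have hdistD : ∀ n, dist (g (u n)) (g (v n)) ≤ D := fun n =>
    hD (mem_image_of_mem g (hu n)) (mem_image_of_mem g (hv n))
  have hD0 : 0 ≤ D := le_trans dist_nonneg (hdistD 0)
  have huv : ∀ n : ℕ, 1 ≤ n → dist (u n) (v n) ≤ D / n := by
    intro n hn
    rw [le_div_iff₀ (by positivity)]
    calc dist (u n) (v n) * n = (n : ℝ) * dist (u n) (v n) := by ring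
    _ ≤ dist (g (u n)) (g (v n)) := (hd n).le
    _ ≤ D := hdistD n
  have hvz : Tendsto (fun n => v (σ n)) atTop (𝓝 z) := by
    rw [tendsto_iff_dist_tendsto_zero]
    apply squeeze_zero' (Eventually.of_forall fun n => dist_nonneg)
    · filter_upwards [eventually_ge_atTop 1] with n hn
      calc dist (v (σ n)) z ≤ dist (v (σ n)) (u (σ n)) + dist (u (σ n)) z := dist_triangle _ _ _
      _ ≤ D / (σ n) + dist (u (σ n)) z := by
          rw [dist_comm]
          exact add_le_add_left (huv (σ n) (le_trans hn (hσ.le_apply))) _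
      _ ≤ D / n + dist (u (σ n)) z := by
          gcongr
          exact_mod_cast hσ.le_apply
    · have h1 : Tendsto (fun n : ℕ => D / n) atTop (𝓝 0) :=
        tendsto_const_nhds.div_atTop tendsto_natCast_atTop_atTop
      have h2 : Tendsto (fun n => dist (u (σ n)) z) atTop (𝓝 0) :=
        tendsto_iff_dist_tendsto_zero.1 huz
      simpa using h1.add h2
  obtain ⟨Kz, t, ht, hlip⟩ := hg z
  have hmemu : ∀ᶠ n in atTop, u (σ n) ∈ t := huz.eventually_mem ht
  have hmemv : ∀ᶠ n in atTop, v (σ n) ∈ t := hvz.eventually_mem ht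
  obtain ⟨n, hn1, hn2, hn3⟩ := (hmemu.and (hmemv.and (eventually_ge_atTop (⌈(Kz:ℝ)⌉₊ + 1)))).exists
  have hK1 : (Kz : ℝ) < σ n := by
    have h1 : (Kz : ℝ) < (⌈(Kz:ℝ)⌉₊ + 1 : ℕ) := by
      push_cast
      exact lt_of_le_of_lt (Nat.le_ceil _) (by linarith)
    calc (Kz:ℝ) < (⌈(Kz:ℝ)⌉₊ + 1 : ℕ) := h1
    _ ≤ (n : ℝ) := by exact_mod_cast hn3
    _ ≤ (σ n : ℝ) := by exact_mod_cast hσ.le_apply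
  have hlow := hd (σ n)
  have hup : dist (g (u (σ n))) (g (v (σ n))) ≤ Kz * dist (u (σ n)) (v (σ n)) :=
    hlip.dist_le_mul _ hn1 _ hn2
  have hdn : (0:ℝ) ≤ dist (u (σ n)) (v (σ n)) := dist_nonneg
  nlinarith

lemma norm_sub_left_le_of_mem_segment {X : Type*} [NormedAddCommGroup X]
    [NormedSpace ℝ X] {x y z : X} (hz : z ∈ segment ℝ x y) : ‖z - x‖ ≤ ‖y - x‖ := by
  obtain ⟨a, b, ha, hb, hab, rfl⟩ := hz
  have h1 : a • x + b • y - x = b • (y - x) := by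
    rw [smul_sub, show a = 1 - b by linarith]
    module
  rw [h1, norm_smul]
  calc ‖b‖ * ‖y - x‖ = b * ‖y - x‖ := by rw [Real.norm_of_nonneg hb]
  _ ≤ 1 * ‖y - x‖ := by have := norm_nonneg (y - x); nlinarith
  _ = ‖y - x‖ := one_mul _

lemma toDual_grad (f : X → ℝ) (z : X) :
    (InnerProductSpace.toDual ℝ X) (gradient f z) = fderiv ℝ f z := by
  simp [gradient]

/-- Descent lemma (with constant `L` instead of `L/2`, which suffices here). -/
lemma descent_lemma (f : X → ℝ) (hf : ContDiff ℝ 1 f) {s : Set X}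
    {L : ℝ} (hL0 : 0 ≤ L)
    (hLip : ∀ z ∈ s, ∀ w ∈ s, ‖gradient f z - gradient f w‖ ≤ L * ‖z - w‖)
    (x y : X) (hseg : segment ℝ x y ⊆ s) :
    f y ≤ f x + (inner ℝ (gradient f x) (y - x) : ℝ) + L * ‖y - x‖ ^ 2 := by
  set g : X → ℝ := fun z => f z - (inner ℝ (gradient f x) z : ℝ) with hg
  set D : X →L[ℝ] ℝ := (InnerProductSpace.toDual ℝ X) (gradient f x) with hD
  have hx : x ∈ segment ℝ x y := left_mem_segment ℝ x y
  have hy : y ∈ segment ℝ x y := right_mem_segment ℝ x y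
  have hderiv : ∀ z ∈ segment ℝ x y,
      HasFDerivWithinAt g (fderiv ℝ f z - D) (segment ℝ x y) z := by
    intro z hz
    exact (((hf.differentiable one_ne_zero z).hasFDerivAt).sub D.hasFDerivAt).hasFDerivWithinAt
  have hbound : ∀ z ∈ segment ℝ x y, ‖fderiv ℝ f z - D‖ ≤ L * ‖y - x‖ := by
    intro z hz
    have h1 : fderiv ℝ f z - D =
        (InnerProductSpace.toDual ℝ X) (gradient f z - gradient f x) := by
      rw [hD, map_sub, toDual_grad, toDual_grad]
    rw [h1, LinearIsometryEquiv.norm_map]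
    calc ‖gradient f z - gradient f x‖ ≤ L * ‖z - x‖ :=
          hLip z (hseg hz) x (hseg hx)
    _ ≤ L * ‖y - x‖ := by gcongr; exact norm_sub_left_le_of_mem_segment hz
  have hmv := (convex_segment x y).norm_image_sub_le_of_norm_hasFDerivWithin_le
    hderiv hbound hx hy
  have h2 : g y - g x = f y - f x - (inner ℝ (gradient f x) (y - x) : ℝ) := by
    simp only [hg]
    have : (inner ℝ (gradient f x) y : ℝ) - (inner ℝ (gradient f x) x : ℝ)
        = (inner ℝ (gradient f x) (y - x) : ℝ) := (inner_sub_right _ _ _).symm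
    linarith
  have h3 : g y - g x ≤ L * ‖y - x‖ * ‖y - x‖ :=
    le_trans (le_abs_self _) (by rw [← Real.norm_eq_abs]; exact hmv)
  nlinarith [h2, h3]

lemma psi_coe (f : X → ℝ) (φ : X → EReal) {z : X} (ht : φ z ≠ ⊤) (hb : φ z ≠ ⊥) :
    psi f φ z = ((f z + (φ z).toReal : ℝ) : EReal) := by
  rw [psi, EReal.coe_add, EReal.coe_toReal ht hb]

/-- Key inequality extracted from global minimality of the subproblem. -/
lemma prox_min_ineq (f : X → ℝ) (φ : X → EReal) (hφbot : ∀ z : X, φ z ≠ ⊥)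
    {x0 : X} (hφx : φ x0 ≠ ⊤) {y : X} {Γ : ℝ}
    (hmin : proxModel f φ x0 Γ y ≤ proxModel f φ x0 Γ x0) :
    φ y ≠ ⊤ ∧
    (inner ℝ (gradient f x0) (y - x0) : ℝ) + Γ / 2 * ‖y - x0‖ ^ 2 + (φ y).toReal
      ≤ (φ x0).toReal := by
  have hx0val : proxModel f φ x0 Γ x0 = ((f x0 : ℝ) : EReal) + φ x0 := by
    simp [proxModel]
  rw [hx0val] at hmin
  have hrhs : ((f x0 : ℝ) : EReal) + φ x0 < ⊤ := EReal.add_lt_top (EReal.coe_ne_top _) hφx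
  have htop : φ y ≠ ⊤ := by
    intro hT
    rw [proxModel] at hmin
    simp only [hT, EReal.coe_add_top] at hmin
    exact absurd (top_le_iff.1 hmin) hrhs.ne
  refine ⟨htop, ?_⟩
  rw [proxModel] at hmin
  rw [← EReal.coe_toReal htop (hφbot y), ← EReal.coe_toReal hφx (hφbot x0),
    ← EReal.coe_add, ← EReal.coe_add, EReal.coe_le_coe_iff] at hmin
  linarith

lemma psi_step_le (f : X → ℝ) (φ : X → EReal) {τ γmin γmax δ : ℝ} {x : ℕ → X} {γ : ℕ → ℝ}
    (halg : ProxGrad f φ τ γmin γmax δ x γ) (k : ℕ) :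
    psi f φ (x (k + 1)) ≤ psi f φ (x k) := by
  obtain ⟨γ0, i, y, hγ1, hγ2, hmin, hacc, hnacc, hγk, hxk1⟩ := halg.step k
  rw [hxk1]
  refine le_trans hacc ?_
  have hc : (0:ℝ) ≤ δ * (τ ^ i * γ0) / 2 * ‖y i - x k‖ ^ 2 := by
    have h1 : (0:ℝ) < τ := lt_trans one_pos halg.htau
    have h2 : (0:ℝ) < γ0 := lt_of_lt_of_le halg.hgmin hγ1
    have := halg.hdelta0
    positivity
  calc psi f φ (x k) - ((δ * (τ ^ i * γ0) / 2 * ‖y i - x k‖ ^ 2 : ℝ) : EReal)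
      ≤ psi f φ (x k) - ((0:ℝ) : EReal) := EReal.sub_le_sub le_rfl (by exact_mod_cast hc)
  _ = psi f φ (x k) := by
      rw [EReal.coe_zero, sub_eq_add_neg, neg_zero, add_zero]

end AuxiliaryLemmas

set_option maxHeartbeats 2000000 in
/-- near an accumulation point the stepsizes remain bounded:
for every `ρ > 0` there is `γ̄_ρ > 0` with `γ k ≤ γ̄_ρ` whenever `x k ∈ B_ρ(x*)`. -/
theorem statement6
    (f : X → ℝ) (φ : X → EReal)
    (hf : ContDiff ℝ 1 f) (hφlsc : LowerSemicontinuous φ)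
    (hφbot : ∀ z : X, φ z ≠ ⊥) (hproper : ∃ z : X, φ z ≠ ⊤)
    (τ γmin γmax δ : ℝ) (x : ℕ → X) (γ : ℕ → ℝ)
    (halg : ProxGrad f φ τ γmin γmax δ x γ)
    (hA : AssumptionA f φ)
    (xs : X) (σ : ℕ → ℕ) (hσ : StrictMono σ)
    (hconv : Tendsto (fun k => x (σ k)) atTop (nhds xs)) :
    ∀ ρ : ℝ, 0 < ρ → ∃ γbar : ℝ, 0 < γbar ∧
      ∀ k : ℕ, x k ∈ Metric.closedBall xs ρ → γ k ≤ γbar := by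
  intro ρ hρ
  have htau0 : (0:ℝ) < τ := lt_trans one_pos halg.htau
  have hψbot : ∀ z : X, psi f φ z ≠ ⊥ := by
    intro z h
    rcases EReal.add_eq_bot_iff.1 h with h | h
    · exact EReal.coe_ne_bot _ h
    · exact hφbot z h
  -- monotonicity of ψ along the iterates
  have hanti : Antitone (fun k => psi f φ (x k)) :=
    antitone_nat_of_succ_le (psi_step_le f φ halg)
  have hψ0top : psi f φ (x 0) ≠ ⊤ :=
    (EReal.add_lt_top (EReal.coe_ne_top _) halg.hx0).ne
  have hψtop : ∀ k, psi f φ (x k) ≠ ⊤ :=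
    fun k => (lt_of_le_of_lt (hanti (Nat.zero_le k)) (lt_top_iff_ne_top.2 hψ0top)).ne
  have hφtop : ∀ k, φ (x k) ≠ ⊤ := by
    intro k h
    apply hψtop k
    rw [psi, h, EReal.coe_add_top]
  set M : ℝ := (psi f φ (x 0)).toReal with hMdef
  have hM : ∀ k, f (x k) + (φ (x k)).toReal ≤ M := by
    intro k
    have h1 : psi f φ (x k) ≤ psi f φ (x 0) := hanti (Nat.zero_le k)
    rw [psi_coe f φ (hφtop k) (hφbot _), ← EReal.coe_toReal hψ0top (hψbot _),
      EReal.coe_le_coe_iff] at h1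
    exact h1
  -- Lipschitz constant of the gradient on the enlarged ball
  have hgradcont : Continuous (gradient f) := by
    have h1 : Continuous (fderiv ℝ f) := hf.continuous_fderiv one_ne_zero
    exact ((InnerProductSpace.toDual ℝ X).symm.continuous.comp h1 : _)
  obtain ⟨L, hL0, hLipd⟩ :=
    locLip_compact hA.2.2 (isCompact_closedBall xs (ρ + 1))
  have hLip : ∀ z ∈ Metric.closedBall xs (ρ + 1), ∀ w ∈ Metric.closedBall xs (ρ + 1),
      ‖gradient f z - gradient f w‖ ≤ L * ‖z - w‖ := by
    intro z hz w hw
    have := hLipd z hz w hw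
    rwa [dist_eq_norm, dist_eq_norm] at this
  -- bounds for gradient and f on the ball of radius ρ
  obtain ⟨G, hG⟩ := (isCompact_closedBall xs ρ).exists_bound_of_continuousOn
    hgradcont.continuousOn
  obtain ⟨F, hF⟩ := (isCompact_closedBall xs ρ).exists_bound_of_continuousOn
    hf.continuous.continuousOn
  have hG0 : 0 ≤ G := le_trans (norm_nonneg _) (hG xs (Metric.mem_closedBall_self hρ.le))
  have hF0 : 0 ≤ F := le_trans (norm_nonneg _) (hF xs (Metric.mem_closedBall_self hρ.le))
  obtain ⟨a, b, hab⟩ := hA.2.1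
  set C : ℝ := max (M + F + ‖a‖ * (‖xs‖ + ρ) + |b|) 0 with hCdef
  set B : ℝ := G + ‖a‖ with hBdef
  have hC0 : 0 ≤ C := le_max_right _ _
  have hB0 : 0 ≤ B := by positivity
  set Γs : ℝ := max (2 * (C + B) + 1) (2 * L / (1 - δ)) with hΓsdef
  have hΓs1 : 1 ≤ Γs := le_max_of_le_left (by linarith)
  -- key quadratic bound for any global minimizer of the subproblem
  have hquad : ∀ k : ℕ, x k ∈ Metric.closedBall xs ρ → ∀ Γ : ℝ, ∀ y : X,
      proxModel f φ (x k) Γ y ≤ proxModel f φ (x k) Γ (x k) →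
      φ y ≠ ⊤ ∧ Γ / 2 * ‖y - x k‖ ^ 2 ≤ C + B * ‖y - x k‖ := by
    intro k hk Γ y hmin
    obtain ⟨hytop, hineq⟩ := prox_min_ineq f φ hφbot (hφtop k) hmin
    refine ⟨hytop, ?_⟩
    set r : ℝ := ‖y - x k‖ with hr
    have hr0 : 0 ≤ r := norm_nonneg _
    have hxknorm : ‖x k‖ ≤ ‖xs‖ + ρ := by
      have := Metric.mem_closedBall.1 hk
      rw [dist_eq_norm] at this
      calc ‖x k‖ = ‖xs + (x k - xs)‖ := by congr 1; abel
      _ ≤ ‖xs‖ + ‖x k - xs‖ := norm_add_le _ _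
      _ ≤ ‖xs‖ + ρ := by linarith
    -- lower bound for φ y
    have hφy : -(‖a‖ * (‖xs‖ + ρ)) - ‖a‖ * r - |b| ≤ (φ y).toReal := by
      have h1 : ((inner ℝ a y : ℝ) + b : ℝ) ≤ (φ y).toReal := by
        have := hab y
        rw [← EReal.coe_toReal hytop (hφbot y), EReal.coe_le_coe_iff] at this
        exact this
      have h2 : (inner ℝ a y : ℝ) = (inner ℝ a (x k) : ℝ) + (inner ℝ a (y - x k) : ℝ) := by
        rw [← inner_add_right]
        norm_num
      have h3 : |(inner ℝ a (x k) : ℝ)| ≤ ‖a‖ * (‖xs‖ + ρ) :=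
        le_trans (abs_real_inner_le_norm a (x k)) (by nlinarith [norm_nonneg a])
      have h4 : |(inner ℝ a (y - x k) : ℝ)| ≤ ‖a‖ * r :=
        abs_real_inner_le_norm a (y - x k)
      have h5 := abs_le.1 h3
      have h6 := abs_le.1 h4
      have h7 := abs_le.1 (le_refl |b|)
      linarith [neg_abs_le b, le_abs_self b]
    have hgradxk : ‖gradient f (x k)‖ ≤ G := hG (x k) hk
    have hinner : -(G * r) ≤ (inner ℝ (gradient f (x k)) (y - x k) : ℝ) := by
      have h1 := abs_real_inner_le_norm (gradient f (x k)) (y - x k)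
      have h2 := abs_le.1 h1
      nlinarith [hr0]
    have hφxk : (φ (x k)).toReal ≤ M + F := by
      have h1 := hM k
      have hfabs : |f (x k)| ≤ F := by rw [← Real.norm_eq_abs]; exact hF (x k) hk
      have h2 := abs_le.1 hfabs
      linarith
    have hCge : M + F + ‖a‖ * (‖xs‖ + ρ) + |b| ≤ C := le_max_left _ _
    simp only [hr] at hineq ⊢
    nlinarith [hineq, hφy, hinner, hφxk, hCge, hr0, norm_nonneg a]
  -- acceptance holds whenever the stepsize is at least Γs
  have haccept : ∀ k : ℕ, x k ∈ Metric.closedBall xs ρ → ∀ Γ : ℝ, Γs ≤ Γ → ∀ y : X,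
      (∀ z : X, proxModel f φ (x k) Γ y ≤ proxModel f φ (x k) Γ z) →
      psi f φ y ≤ psi f φ (x k) - ((δ * Γ / 2 * ‖y - x k‖ ^ 2 : ℝ) : EReal) := by
    intro k hk Γ hΓ y hmin
    have hΓ1 : 1 ≤ Γ := le_trans hΓs1 hΓ
    obtain ⟨hytop, hqbound⟩ := hquad k hk Γ y (hmin (x k))
    obtain ⟨_, hineq⟩ := prox_min_ineq f φ hφbot (hφtop k) (hmin (x k))
    set r : ℝ := ‖y - x k‖ with hr
    have hr0 : 0 ≤ r := norm_nonneg _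
    -- r ≤ 1
    have hrle1 : r ≤ 1 := by
      by_contra hgt
      push_neg at hgt
      have h1 : 2 * (C + B) + 1 ≤ Γ := le_trans (le_max_left _ _) hΓ
      have er1 : (0:ℝ) ≤ r ^ 2 - 1 := by nlinarith [hgt]
      have er2 : (0:ℝ) ≤ r ^ 2 - r := by nlinarith [hgt]
      have e1 : 0 ≤ C * (r ^ 2 - 1) := mul_nonneg hC0 er1
      have e2 : 0 ≤ B * (r ^ 2 - r) := mul_nonneg hB0 er2
      have e3 : (2 * (C + B) + 1) * r ^ 2 ≤ Γ * r ^ 2 :=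
        mul_le_mul_of_nonneg_right h1 (sq_nonneg r)
      nlinarith [hqbound, e1, e2, e3, er1]
    -- the segment stays in the enlarged ball
    have hseg : segment ℝ (x k) y ⊆ Metric.closedBall xs (ρ + 1) := by
      intro z hz
      rw [Metric.mem_closedBall, dist_eq_norm]
      calc ‖z - xs‖ = ‖(z - x k) + (x k - xs)‖ := by abel_nf
      _ ≤ ‖z - x k‖ + ‖x k - xs‖ := norm_add_le _ _
      _ ≤ r + ρ := by
          have h1 := norm_sub_left_le_of_mem_segment hz
          have h2 := Metric.mem_closedBall.1 hk
          rw [dist_eq_norm] at h2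
          exact add_le_add (le_trans h1 le_rfl) h2
      _ ≤ ρ + 1 := by linarith
    have hdesc := descent_lemma f hf hL0 hLip (x k) y hseg
    -- convert to real inequality
    rw [psi_coe f φ hytop (hφbot y), psi_coe f φ (hφtop k) (hφbot _), ← EReal.coe_sub,
      EReal.coe_le_coe_iff]
    have hLΓ : L ≤ (1 - δ) * Γ / 2 := by
      have h1 : 2 * L / (1 - δ) ≤ Γ := le_trans (le_max_right _ _) hΓ
      have h2 : (0:ℝ) < 1 - δ := by linarith [halg.hdelta1]
      rw [div_le_iff₀ h2] at h1
      linarith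
    simp only [hr] at hdesc hineq ⊢
    nlinarith [hdesc, hineq, sq_nonneg ‖y - x k‖, halg.hdelta0, hLΓ]
  refine ⟨max γmax (τ * Γs), lt_of_lt_of_le (lt_of_lt_of_le halg.hgmin halg.hgmm)
    (le_max_left _ _), ?_⟩
  intro k hk
  obtain ⟨γ0, i, y, hγ1, hγ2, hmin, hacc, hnacc, hγk, hxk1⟩ := halg.step k
  cases i with
  | zero =>
    rw [hγk, pow_zero, one_mul]
    exact le_max_of_le_left hγ2
  | succ j =>
    have hτj : τ ^ j * γ0 < Γs := by
      by_contra hge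
      push_neg at hge
      exact hnacc j (Nat.lt_succ_self j)
        (haccept k hk (τ ^ j * γ0) hge (y j) (hmin j (Nat.le_succ j)))
    rw [hγk]
    have : τ ^ (j + 1) * γ0 = τ * (τ ^ j * γ0) := by ring
    rw [this]
    refine le_max_of_le_right ?_
    have := mul_le_mul_of_nonneg_left hτj.le htau0.le
    linarith
end

section
/- Let {xᵏ} be a sequence generated by the proximal gradient method and suppose ψ is bounded from below on dom φ and φ is bounded from below by an affine function. Let K ⊂ ℕ be an infinite index set such that xᵏ → x̄ along K for some x̄ ∈ X, and for each k ∈ K let γ̂ₖ > 0 and let x̂ᵏ be a global minimizer of x ↦ f(xᵏ) + ⟨∇f(xᵏ), x − xᵏ⟩ + (γ̂ₖ/2)‖x − xᵏ‖² + φ(x). If γ̂ₖ → ∞ along K, then ‖x̂ᵏ − xᵏ‖ → 0 along K (and hence x̂ᵏ → x̄ along K). -/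
open Filter Topology Set Pointwise

variable {X : Type*} [NormedAddCommGroup X] [InnerProductSpace ℝ X] [FiniteDimensional ℝ X]

private lemma psiDecreasing {X : Type*} [NormedAddCommGroup X] [InnerProductSpace ℝ X]
    [FiniteDimensional ℝ X]
    (f : X → ℝ) (φ : X → EReal) (hφbot : ∀ z : X, φ z ≠ ⊥)
    (τ γmin γmax δ : ℝ) (x : ℕ → X) (γ : ℕ → ℝ)
    (halg : ProxGrad f φ τ γmin γmax δ x γ) :
    ∀ k, psi f φ (x k) ≤ psi f φ (x 0) ∧ φ (x k) ≠ ⊤ := by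
  have hψ0 : psi f φ (x 0) ≠ ⊤ := by
    rw [psi, show φ (x 0) = (((φ (x 0)).toReal : ℝ) : EReal) from
      (EReal.coe_toReal halg.hx0 (hφbot _)).symm, ← EReal.coe_add]
    exact EReal.coe_ne_top _
  intro k
  induction k with
  | zero => exact ⟨le_rfl, halg.hx0⟩
  | succ k ih =>
    obtain ⟨γ0, i, y, h1, _, _, hacc, _, _, hxy⟩ := halg.step k
    have hτ : (0:ℝ) < τ := lt_trans one_pos halg.htau
    have hγ0 : (0:ℝ) < γ0 := lt_of_lt_of_le halg.hgmin h1
    have hc : (0:ℝ) ≤ δ * (τ ^ i * γ0) / 2 * ‖y i - x k‖ ^ 2 :=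
      mul_nonneg (div_nonneg (mul_nonneg halg.hdelta0.le
        (mul_nonneg (pow_nonneg hτ.le i) hγ0.le)) (by norm_num)) (sq_nonneg _)
    have hle : psi f φ (x (k+1)) ≤ psi f φ (x k) := by
      rw [hxy]
      refine le_trans hacc ?_
      have h2 : psi f φ (x k) - ((δ * (τ ^ i * γ0) / 2 * ‖y i - x k‖ ^ 2 : ℝ) : EReal)
          ≤ psi f φ (x k) - ((0 : ℝ) : EReal) :=
        EReal.sub_le_sub le_rfl (by exact_mod_cast hc)
      simpa using h2
    refine ⟨hle.trans ih.1, fun htop => ?_⟩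
    have heq : psi f φ (x (k+1)) = ⊤ := by
      rw [psi, htop]; exact EReal.coe_add_top _
    exact hψ0 (top_le_iff.mp (heq ▸ (hle.trans ih.1)))

/-- if `x (σ k) → x̄` along a subsequence and `x̂ k` minimizes the
subproblem at `x (σ k)` with stepsize `γ̂ k → ∞`, then `‖x̂ k - x (σ k)‖ → 0`
and hence `x̂ k → x̄`. -/
theorem statement7
    (f : X → ℝ) (φ : X → EReal)
    (hf : ContDiff ℝ 1 f) (hφlsc : LowerSemicontinuous φ)
    (hφbot : ∀ z : X, φ z ≠ ⊥) (hproper : ∃ z : X, φ z ≠ ⊤)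
    (τ γmin γmax δ : ℝ) (x : ℕ → X) (γ : ℕ → ℝ)
    (halg : ProxGrad f φ τ γmin γmax δ x γ)
    (hbdd : ∃ m : ℝ, ∀ z : X, φ z ≠ ⊤ → (m : EReal) ≤ psi f φ z)
    (haff : ∃ a : X, ∃ b : ℝ, ∀ z : X, (((inner ℝ a z : ℝ) + b : ℝ) : EReal) ≤ φ z)
    (σ : ℕ → ℕ) (hσ : StrictMono σ) (xbar : X)
    (hconv : Tendsto (fun k => x (σ k)) atTop (nhds xbar))
    (γhat : ℕ → ℝ) (hγhatpos : ∀ k, 0 < γhat k)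
    (xhat : ℕ → X)
    (hxhat : ∀ k : ℕ, ∀ z : X,
      proxModel f φ (x (σ k)) (γhat k) (xhat k) ≤ proxModel f φ (x (σ k)) (γhat k) z)
    (hγhat : Tendsto γhat atTop atTop) :
    Tendsto (fun k => ‖xhat k - x (σ k)‖) atTop (nhds 0) ∧
    Tendsto xhat atTop (nhds xbar) := by
  obtain ⟨a, b, haffab⟩ := haff
  have hA := psiDecreasing f φ hφbot τ γmin γmax δ x γ halg
  have hgradcont : Continuous (gradient f) := by
    have h1 : Continuous (fderiv ℝ f) := hf.continuous_fderiv one_ne_zero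
    exact (InnerProductSpace.toDual ℝ X).symm.continuous.comp h1
  set p : ℕ → X := fun k => x (σ k) with hp
  set S : ℝ := f (x 0) + (φ (x 0)).toReal with hS
  have hψ0 : psi f φ (x 0) = ((S : ℝ) : EReal) := by
    rw [psi, hS, EReal.coe_add, EReal.coe_toReal halg.hx0 (hφbot _)]
  -- the key per-k inequality
  have key : ∀ k, γhat k / 2 * ‖xhat k - p k‖ ^ 2 ≤
      (‖gradient f (p k)‖ + ‖a‖) * ‖xhat k - p k‖ +
        (S - f (p k) + ‖a‖ * ‖p k‖ + |b|) := by
    intro k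
    have hφp : φ (p k) ≠ ⊤ := (hA (σ k)).2
    have hφp' : φ (p k) = (((φ (p k)).toReal : ℝ) : EReal) :=
      (EReal.coe_toReal hφp (hφbot _)).symm
    have hmin : ((f (p k) + (inner ℝ (gradient f (p k)) (xhat k - p k) : ℝ) +
          γhat k / 2 * ‖xhat k - p k‖ ^ 2 : ℝ) : EReal) + φ (xhat k) ≤
        (f (p k) : EReal) + φ (p k) := by
      have h := hxhat k (p k)
      simpa [proxModel, hp] using h
    have h3 : ((f (p k) + (inner ℝ (gradient f (p k)) (xhat k - p k) : ℝ) +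
          γhat k / 2 * ‖xhat k - p k‖ ^ 2 + ((inner ℝ a (xhat k) : ℝ) + b) : ℝ) : EReal) ≤
        ((f (p k) + (φ (p k)).toReal : ℝ) : EReal) := by
      rw [EReal.coe_add, EReal.coe_add (f (p k))]
      calc ((f (p k) + (inner ℝ (gradient f (p k)) (xhat k - p k) : ℝ) +
            γhat k / 2 * ‖xhat k - p k‖ ^ 2 : ℝ) : EReal) +
            (((inner ℝ a (xhat k) : ℝ) + b : ℝ) : EReal)
          ≤ ((f (p k) + (inner ℝ (gradient f (p k)) (xhat k - p k) : ℝ) +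
            γhat k / 2 * ‖xhat k - p k‖ ^ 2 : ℝ) : EReal) + φ (xhat k) :=
            add_le_add le_rfl (haffab (xhat k))
        _ ≤ (f (p k) : EReal) + φ (p k) := hmin
        _ = (f (p k) : EReal) + (((φ (p k)).toReal : ℝ) : EReal) := by rw [← hφp']
    have hreal : f (p k) + (inner ℝ (gradient f (p k)) (xhat k - p k) : ℝ) +
        γhat k / 2 * ‖xhat k - p k‖ ^ 2 + ((inner ℝ a (xhat k) : ℝ) + b) ≤
        f (p k) + (φ (p k)).toReal := by exact_mod_cast h3
    have hφle : (φ (p k)).toReal ≤ S - f (p k) := by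
      have hle : psi f φ (p k) ≤ psi f φ (x 0) := (hA (σ k)).1
      rw [hψ0, psi, hφp', ← EReal.coe_add, EReal.coe_le_coe_iff] at hle
      linarith
    have hia : (inner ℝ a (xhat k) : ℝ) = (inner ℝ a (p k) : ℝ) + (inner ℝ a (xhat k - p k) : ℝ) := by
      rw [← inner_add_right]
      norm_num
    have habs1 : |(inner ℝ (gradient f (p k)) (xhat k - p k) : ℝ)| ≤
        ‖gradient f (p k)‖ * ‖xhat k - p k‖ := abs_real_inner_le_norm _ _
    have habs2 : |(inner ℝ a (xhat k - p k) : ℝ)| ≤ ‖a‖ * ‖xhat k - p k‖ :=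
      abs_real_inner_le_norm _ _
    have habs3 : |(inner ℝ a (p k) : ℝ)| ≤ ‖a‖ * ‖p k‖ := abs_real_inner_le_norm _ _
    have hb : -|b| ≤ b := neg_abs_le b
    rw [hia] at hreal
    rw [abs_le] at habs1 habs2 habs3
    nlinarith [habs1.1, habs2.1, habs3.1]
  -- uniform bounds along the convergent subsequence
  obtain ⟨M1, hM1⟩ := (((hgradcont.tendsto xbar).comp hconv).norm).bddAbove_range
  obtain ⟨M2, hM2⟩ := (hconv.norm).bddAbove_range
  obtain ⟨M3, hM3⟩ := (((hf.continuous.tendsto xbar).comp hconv).neg).bddAbove_range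
  have hM1' : ∀ k, ‖gradient f (p k)‖ ≤ M1 := fun k => hM1 (Set.mem_range_self k)
  have hM2' : ∀ k, ‖p k‖ ≤ M2 := fun k => hM2 (Set.mem_range_self k)
  have hM3' : ∀ k, -(f (p k)) ≤ M3 := fun k => hM3 (Set.mem_range_self k)
  obtain ⟨M, C, hM0, hMC⟩ : ∃ M C : ℝ, 0 ≤ M ∧
      ∀ k, γhat k / 2 * ‖xhat k - p k‖ ^ 2 ≤ M * ‖xhat k - p k‖ + C := by
    refine ⟨M1 + ‖a‖, S + M3 + ‖a‖ * M2 + |b|,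
      add_nonneg ((norm_nonneg _).trans (hM1' 0)) (norm_nonneg a), fun k => ?_⟩
    have h := key k
    have h1 := hM1' k
    have h2 := hM2' k
    have h3 := hM3' k
    nlinarith [norm_nonneg (xhat k - p k), norm_nonneg a,
      mul_nonneg (sub_nonneg.mpr h1) (norm_nonneg (xhat k - p k)),
      mul_nonneg (norm_nonneg a) (sub_nonneg.mpr h2)]
  have hsqbound : ∀ᶠ k in atTop,
      ‖xhat k - p k‖ ^ 2 ≤ (4 * M ^ 2 + 4 * max C 0) / γhat k := by
    filter_upwards [hγhat.eventually_ge_atTop 1] with k hk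
    have h := hMC k
    have hg0 : (0:ℝ) < γhat k := hγhatpos k
    rw [le_div_iff₀ hg0]
    have h2 : ‖xhat k - p k‖ ^ 2 * γhat k ^ 2 / 4 ≤ M ^ 2 + C * γhat k := by
      nlinarith [sq_nonneg (γhat k * ‖xhat k - p k‖ - 2 * M),
        mul_le_mul_of_nonneg_left h hg0.le]
    nlinarith [h2, mul_nonneg (sub_nonneg.mpr (le_max_left C 0)) hg0.le,
      mul_nonneg (sq_nonneg M) (sub_nonneg.mpr hk), hg0]
  have hDiv : Tendsto (fun k => (4 * M ^ 2 + 4 * max C 0) / γhat k) atTop (nhds 0) :=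
    tendsto_const_nhds.div_atTop hγhat
  have hsq0 : Tendsto (fun k => ‖xhat k - p k‖ ^ 2) atTop (nhds 0) :=
    squeeze_zero' (Eventually.of_forall fun k => sq_nonneg _) hsqbound hDiv
  have hdn : Tendsto (fun k => ‖xhat k - p k‖) atTop (nhds 0) := by
    have h : Tendsto (fun k => Real.sqrt (‖xhat k - p k‖ ^ 2)) atTop
        (nhds (Real.sqrt 0)) := (Real.continuous_sqrt.tendsto 0).comp hsq0
    have heq : (fun k => Real.sqrt (‖xhat k - p k‖ ^ 2)) = fun k => ‖xhat k - p k‖ :=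
      funext fun k => Real.sqrt_sq (norm_nonneg _)
    rw [heq, Real.sqrt_zero] at h
    exact h
  refine ⟨hdn, ?_⟩
  have hd0 : Tendsto (fun k => xhat k - p k) atTop (nhds 0) :=
    tendsto_zero_iff_norm_tendsto_zero.mpr hdn
  have h := hd0.add hconv
  simpa using h
end

section
/- Let {xᵏ} be a sequence generated by the proximal gradient method with parameters δ ∈ (0,1) and γ_min > 0, suppose Assumption A holds, let {xᵏ}_{k∈K} be a subsequence converging to x*, and suppose ψ has the KL property at x* with desingularization function χ : [0, η] → [0, ∞). Let ρ := η + 1/2, let L_ρ > 0 be a Lipschitz constant of ∇f on the compact set C_ρ := B_ρ(x*) ∩ {x ∈ X : ψ(x) ≤ ψ(x⁰)}, and let γ̄_ρ > 0 be a constant with γₖ ≤ γ̄_ρ for all k with xᵏ ∈ B_ρ(x*). If ψ(xᵏ) > ψ(x*) for all k ∈ ℕ, then there exists k₀ ∈ K with ψ(x^{k₀}) − ψ(x*) < η such that α := ‖x^{k₀} − x*‖ + √(8(ψ(x^{k₀}) − ψ(x*))/(δγ_min)) + (2(γ̄_ρ + L_ρ)/(δγ_min))·χ(ψ(x^{k₀})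 − ψ(x*)) satisfies α < 1/2. -/
open Filter Topology Set Pointwise

variable {X : Type*} [NormedAddCommGroup X] [InnerProductSpace ℝ X] [FiniteDimensional ℝ X]

/-- if `ψ(xᵏ) > ψ(x*)` for all `k`, there is an index `k₀` from the
convergent subsequence with `ψ(x^{k₀}) - ψ(x*) < η` such that the constant `α`
built from `k₀` satisfies `α < 1/2`. -/
theorem statement10
    (f : X → ℝ) (φ : X → EReal)
    (hf : ContDiff ℝ 1 f) (hφlsc : LowerSemicontinuous φ)
    (hφbot : ∀ z : X, φ z ≠ ⊥) (hproper : ∃ z : X, φ z ≠ ⊤)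
    (τ γmin γmax δ : ℝ) (x : ℕ → X) (γ : ℕ → ℝ)
    (halg : ProxGrad f φ τ γmin γmax δ x γ)
    (hA : AssumptionA f φ)
    (xs : X) (σ : ℕ → ℕ) (hσ : StrictMono σ)
    (hconv : Tendsto (fun k => x (σ k)) atTop (nhds xs))
    (η : ℝ) (χ : ℝ → ℝ) (hKL : HasKLProperty (psi f φ) xs η χ)
    (Lρ : ℝ) (hLρ : 0 < Lρ)
    (hLip : LipschitzOnWith (Real.toNNReal Lρ) (gradient f)
      (Metric.closedBall xs (η + 1 / 2) ∩ {z : X | psi f φ z ≤ psi f φ (x 0)}))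
    (γbar : ℝ) (hγbar : 0 < γbar)
    (hγbarbound : ∀ k : ℕ, x k ∈ Metric.closedBall xs (η + 1 / 2) → γ k ≤ γbar)
    (hstrict : ∀ k : ℕ, psi f φ xs < psi f φ (x k)) :
    ∃ k0 : ℕ, (∃ j : ℕ, σ j = k0) ∧
      psi f φ (x k0) - psi f φ xs < (η : EReal) ∧
      ‖x k0 - xs‖ +
        Real.sqrt (8 * (psi f φ (x k0) - psi f φ xs).toReal / (δ * γmin)) +
        2 * (γbar + Lρ) / (δ * γmin) * χ ((psi f φ (x k0) - psi f φ xs).toReal)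
      < 1 / 2 := by
  obtain ⟨hη, hsub, hχcont, hχconc, hχnn, hχ0, hχd, hχdc, hU⟩ := hKL
  obtain ⟨⟨m, hm⟩, -, -⟩ := hA
  have hδγ : 0 < δ * γmin := mul_pos halg.hdelta0 halg.hgmin
  have key : ∀ k : ℕ, γmin ≤ γ k ∧
      psi f φ (x (k+1)) ≤ psi f φ (x k) - ((δ * γ k / 2 * ‖x (k+1) - x k‖^2 : ℝ) : EReal) ∧
      ∀ z : X, proxModel f φ (x k) (γ k) (x (k+1)) ≤ proxModel f φ (x k) (γ k) z := by
    intro k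
    obtain ⟨γ0, i, y, hγ0, -, hmin, hacc, -, hγk, hxk⟩ := halg.step k
    have h1 : γmin ≤ τ ^ i * γ0 :=
      hγ0.trans (le_mul_of_one_le_left (halg.hgmin.le.trans hγ0) (one_le_pow₀ halg.htau.le))
    refine ⟨hγk ▸ h1, ?_, ?_⟩
    · rw [hxk, hγk]; exact hacc
    · intro z; rw [hxk, hγk]; exact hmin i le_rfl z
  have hγpos : ∀ k, 0 < γ k := fun k => lt_of_lt_of_le halg.hgmin (key k).1
  have hψbot : ∀ z : X, psi f φ z ≠ ⊥ := fun z => by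
    simp [psi, EReal.add_eq_bot_iff, hφbot z]
  have hφ_of_ψ : ∀ z : X, psi f φ z ≠ ⊤ → φ z ≠ ⊤ := by
    intro z h hc
    exact h (by simp only [psi]; rw [hc]; exact EReal.add_top_of_ne_bot (EReal.coe_ne_bot _))
  have hψ_of_φ : ∀ z : X, φ z ≠ ⊤ → psi f φ z ≠ ⊤ := by
    intro z h
    simp only [psi]
    rw [← EReal.coe_toReal h (hφbot z), ← EReal.coe_add]
    exact EReal.coe_ne_top _
  have hψtop : ∀ k, psi f φ (x k) ≠ ⊤ := by
    intro k; induction k with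
    | zero => exact hψ_of_φ _ halg.hx0
    | succ n ih =>
      have h := (key n).2.1
      intro hc
      rw [hc, ← EReal.coe_toReal ih (hψbot _), ← EReal.coe_sub, top_le_iff] at h
      exact EReal.coe_ne_top _ h
  set p : ℕ → ℝ := fun k => (psi f φ (x k)).toReal with hp
  have hrep : ∀ k, psi f φ (x k) = ((p k : ℝ) : EReal) :=
    fun k => (EReal.coe_toReal (hψtop k) (hψbot _)).symm
  have hφt : ∀ k, φ (x k) ≠ ⊤ := fun k => hφ_of_ψ _ (hψtop k)
  set q : ℕ → ℝ := fun k => (φ (x k)).toReal with hq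
  have hqrep : ∀ k, φ (x k) = ((q k : ℝ) : EReal) :=
    fun k => (EReal.coe_toReal (hφt k) (hφbot _)).symm
  have hpq : ∀ k, p k = f (x k) + q k := by
    intro k
    show (psi f φ (x k)).toReal = f (x k) + q k
    simp only [psi]
    rw [hqrep k, ← EReal.coe_add, EReal.toReal_coe]
  have hψxs_top : psi f φ xs ≠ ⊤ :=
    lt_top_iff_ne_top.mp ((hstrict 0).trans (lt_top_iff_ne_top.mpr (hψtop 0)))
  set ps : ℝ := (psi f φ xs).toReal with hps
  have hreps : psi f φ xs = ((ps : ℝ) : EReal) := (EReal.coe_toReal hψxs_top (hψbot _)).symm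
  have hφxs_top : φ xs ≠ ⊤ := hφ_of_ψ _ hψxs_top
  set qs : ℝ := (φ xs).toReal with hqs
  have hqreps : φ xs = ((qs : ℝ) : EReal) := (EReal.coe_toReal hφxs_top (hφbot _)).symm
  have hpqs : ps = f xs + qs := by
    show (psi f φ xs).toReal = f xs + qs
    simp only [psi]
    rw [hqreps, ← EReal.coe_add, EReal.toReal_coe]
  have hdesc : ∀ k, p (k+1) + δ * γ k / 2 * ‖x (k+1) - x k‖^2 ≤ p k := by
    intro k
    have h := (key k).2.1
    rw [hrep k, hrep (k+1), ← EReal.coe_sub] at h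
    have h2 := EReal.coe_le_coe_iff.mp h
    linarith
  have hterm : ∀ k, 0 ≤ δ * γ k / 2 * ‖x (k+1) - x k‖^2 := fun k =>
    mul_nonneg (div_nonneg (mul_nonneg halg.hdelta0.le (hγpos k).le) (by norm_num)) (sq_nonneg _)
  have hanti : Antitone p := antitone_nat_of_succ_le fun k =>
    le_trans (le_add_of_nonneg_right (hterm k)) (hdesc k)
  have hlb : ∀ k, m ≤ p k := fun k =>
    EReal.coe_le_coe_iff.mp (by rw [← hrep k]; exact hm (x k) (hφt k))
  have hbdd : BddBelow (Set.range p) := ⟨m, by rintro _ ⟨k, rfl⟩; exact hlb k⟩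
  have hpconv : Tendsto p atTop (𝓝 (⨅ k, p k)) := tendsto_atTop_ciInf hanti hbdd
  have hdiff0 : Tendsto (fun k => p k - p (k+1)) atTop (𝓝 0) := by
    have h2 : Tendsto (fun k => p (k+1)) atTop (𝓝 (⨅ k, p k)) :=
      hpconv.comp (tendsto_add_atTop_nat 1)
    simpa using hpconv.sub h2
  have hΔsq : Tendsto (fun k => ‖x (k+1) - x k‖^2) atTop (𝓝 0) := by
    have hub2 : ∀ k, ‖x (k+1) - x k‖^2 ≤ 2 / (δ * γmin) * (p k - p (k+1)) := by
      intro k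
      have hs := sq_nonneg ‖x (k+1) - x k‖
      have h1 : δ * γmin ≤ δ * γ k := mul_le_mul_of_nonneg_left (key k).1 halg.hdelta0.le
      have h2 := hdesc k
      rw [show 2 / (δ * γmin) * (p k - p (k+1)) = 2 * (p k - p (k+1)) / (δ * γmin) by ring,
        le_div_iff₀ hδγ]
      nlinarith [mul_le_mul_of_nonneg_right h1 hs]
    have h3 := hdiff0.const_mul (2 / (δ * γmin))
    rw [mul_zero] at h3
    exact squeeze_zero (fun k => sq_nonneg _) hub2 h3
  have hΔ : Tendsto (fun k => ‖x (k+1) - x k‖) atTop (𝓝 0) := by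
    have h2 := (Real.continuous_sqrt.tendsto 0).comp hΔsq
    rw [Real.sqrt_zero] at h2
    exact h2.congr fun k => Real.sqrt_sq (norm_nonneg _)
  have hσtop : Tendsto σ atTop atTop := hσ.tendsto_atTop
  have hσ1 : Tendsto (fun j => σ j - 1) atTop atTop := (tendsto_sub_atTop_nat 1).comp hσtop
  have hΔσ : Tendsto (fun j => ‖x (σ j) - x (σ j - 1)‖) atTop (𝓝 0) := by
    have h2 := hΔ.comp hσ1
    apply h2.congr'
    filter_upwards [hσtop.eventually_ge_atTop 1] with j hj
    have h3 : σ j - 1 + 1 = σ j := Nat.succ_pred_eq_of_pos hj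
    simp [Function.comp, h3]
  have hdiffσ : Tendsto (fun j => x (σ j) - x (σ j - 1)) atTop (𝓝 0) :=
    tendsto_zero_iff_norm_tendsto_zero.mpr hΔσ
  have hpred : Tendsto (fun j => x (σ j - 1)) atTop (𝓝 xs) := by
    have h2 := hconv.sub hdiffσ
    rw [sub_zero] at h2
    exact h2.congr fun j => sub_sub_cancel _ _
  have hplt : ∀ k, ps < p k := fun k =>
    EReal.coe_lt_coe_iff.mp (by rw [← hrep k, ← hreps]; exact hstrict k)
  have hgrad : Continuous (gradient f) :=
    ((InnerProductSpace.toDual ℝ X).symm.continuous).comp (hf.continuous_fderiv one_ne_zero)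
  set G : ℕ → ℝ := fun j =>
    (f (x (σ j)) - f xs + (inner ℝ (gradient f (x (σ j - 1))) (xs - x (σ j - 1)) : ℝ)
      - (inner ℝ (gradient f (x (σ j - 1))) (x (σ j) - x (σ j - 1)) : ℝ))
    + γ (σ j - 1) / 2 * ‖xs - x (σ j - 1)‖^2 with hG
  have hub : ∀ᶠ j in atTop, p (σ j) ≤ ps + G j := by
    filter_upwards [hσtop.eventually_ge_atTop 1] with j hj
    have hk1 : σ j - 1 + 1 = σ j := Nat.succ_pred_eq_of_pos hj
    have h := (key (σ j - 1)).2.2 xs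
    simp only [proxModel] at h
    rw [hqrep (σ j - 1 + 1), hqreps, ← EReal.coe_add, ← EReal.coe_add,
      EReal.coe_le_coe_iff] at h
    rw [hk1] at h
    have hγnn : 0 ≤ γ (σ j - 1) / 2 * ‖x (σ j) - x (σ j - 1)‖^2 :=
      mul_nonneg (div_nonneg (hγpos _).le (by norm_num)) (sq_nonneg _)
    rw [hG]
    simp only
    rw [hpq (σ j), hpqs]
    linarith
  have hGlim : Tendsto G atTop (𝓝 0) := by
    have T1 : Tendsto (fun j => f (x (σ j)) - f xs) atTop (𝓝 0) := by
      have h2 := ((hf.continuous.tendsto xs).comp hconv).sub (tendsto_const_nhds (x := f xs))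
      simpa using h2
    have Tg : Tendsto (fun j => gradient f (x (σ j - 1))) atTop (𝓝 (gradient f xs)) :=
      (hgrad.tendsto xs).comp hpred
    have T2 : Tendsto (fun j => (inner ℝ (gradient f (x (σ j - 1))) (xs - x (σ j - 1)) : ℝ))
        atTop (𝓝 0) := by
      have h2 : Tendsto (fun j => xs - x (σ j - 1)) atTop (𝓝 0) := by
        have h3 := (tendsto_const_nhds (x := xs)).sub hpred
        rw [sub_self] at h3; exact h3
      have h4 : Tendsto (fun j => (inner ℝ (gradient f (x (σ j - 1))) (xs - x (σ j - 1)) : ℝ))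
          atTop (𝓝 (inner ℝ (gradient f xs) (0:X) : ℝ)) := Tg.inner h2
      simpa using h4
    have T3 : Tendsto (fun j => (inner ℝ (gradient f (x (σ j - 1))) (x (σ j) - x (σ j - 1)) : ℝ))
        atTop (𝓝 0) := by
      have h4 : Tendsto (fun j => (inner ℝ (gradient f (x (σ j - 1))) (x (σ j) - x (σ j - 1)) : ℝ))
          atTop (𝓝 (inner ℝ (gradient f xs) (0:X) : ℝ)) := Tg.inner hdiffσ
      simpa using h4
    have T4 : Tendsto (fun j => γ (σ j - 1) / 2 * ‖xs - x (σ j - 1)‖^2) atTop (𝓝 0) := by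
      have h2 : Tendsto (fun j => ‖xs - x (σ j - 1)‖) atTop (𝓝 0) := by
        have h3 := (tendsto_const_nhds (x := xs)).sub hpred
        rw [sub_self] at h3
        exact tendsto_zero_iff_norm_tendsto_zero.mp h3
      have hnorm2 : Tendsto (fun j => ‖xs - x (σ j - 1)‖^2) atTop (𝓝 0) := by
        have h4 := h2.mul h2
        rw [mul_zero] at h4
        exact h4.congr fun j => (sq ‖xs - x (σ j - 1)‖).symm
      have hup : Tendsto (fun j => γbar / 2 * ‖xs - x (σ j - 1)‖^2) atTop (𝓝 0) := by
        have h6 := hnorm2.const_mul (γbar / 2)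
        rw [mul_zero] at h6
        exact h6
      refine squeeze_zero' (Eventually.of_forall fun j =>
        mul_nonneg (div_nonneg (hγpos _).le (by norm_num)) (sq_nonneg _)) ?_ hup
      filter_upwards [hpred.eventually
        (Metric.closedBall_mem_nhds xs (by linarith : (0:ℝ) < η + 1/2))] with j hj
      have hb := hγbarbound (σ j - 1) hj
      have hs := sq_nonneg ‖xs - x (σ j - 1)‖
      nlinarith
    have h7 := ((T1.add T2).sub T3).add T4
    rw [hG]
    simpa using h7
  have hpσ : Tendsto (fun j => p (σ j)) atTop (𝓝 ps) := by
    have hup : Tendsto (fun j => ps + G j) atTop (𝓝 ps) := by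
      have h2 := (tendsto_const_nhds (x := ps)).add hGlim
      simpa using h2
    exact tendsto_of_tendsto_of_tendsto_of_le_of_le' tendsto_const_nhds hup
      (Eventually.of_forall fun j => (hplt (σ j)).le) hub
  have ht : Tendsto (fun j => p (σ j) - ps) atTop (𝓝 0) := by
    have h2 := hpσ.sub (tendsto_const_nhds (x := ps))
    rw [sub_self] at h2; exact h2
  have hχt : Tendsto (fun j => χ (p (σ j) - ps)) atTop (𝓝 0) := by
    have hw : Tendsto (fun j => p (σ j) - ps) atTop (𝓝[Icc (0:ℝ) η] 0) := by
      rw [tendsto_nhdsWithin_iff]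
      refine ⟨ht, ?_⟩
      filter_upwards [ht.eventually (eventually_le_nhds hη)] with j hj
      exact ⟨(sub_pos.mpr (hplt (σ j))).le, hj⟩
    have h2 := (hχcont 0 ⟨le_refl 0, hη.le⟩).tendsto.comp hw
    rw [hχ0] at h2
    exact h2
  have hsq : Tendsto (fun j => Real.sqrt (8 * (p (σ j) - ps) / (δ * γmin))) atTop (𝓝 0) := by
    have hin : Tendsto (fun j => 8 * (p (σ j) - ps) / (δ * γmin)) atTop (𝓝 0) := by
      have h2 := (ht.const_mul (8:ℝ)).div_const (δ * γmin)
      simpa using h2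
    have h2 := (Real.continuous_sqrt.tendsto 0).comp hin
    rw [Real.sqrt_zero] at h2
    exact h2
  have hnormσ : Tendsto (fun j => ‖x (σ j) - xs‖) atTop (𝓝 0) := by
    have h2 := hconv.sub (tendsto_const_nhds (x := xs))
    rw [sub_self] at h2
    exact tendsto_zero_iff_norm_tendsto_zero.mp h2
  have halpha : Tendsto (fun j => ‖x (σ j) - xs‖ + Real.sqrt (8 * (p (σ j) - ps) / (δ * γmin))
      + 2 * (γbar + Lρ) / (δ * γmin) * χ (p (σ j) - ps)) atTop (𝓝 0) := by
    have h2 := (hnormσ.add hsq).add (hχt.const_mul (2 * (γbar + Lρ) / (δ * γmin)))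
    simpa using h2
  obtain ⟨j, hj1, hj2⟩ := ((halpha.eventually_lt_const (by norm_num : (0:ℝ) < 1/2)).and
    (ht.eventually_lt_const hη)).exists
  refine ⟨σ j, ⟨j, rfl⟩, ?_, ?_⟩
  · rw [hrep (σ j), hreps, ← EReal.coe_sub]
    exact EReal.coe_lt_coe_iff.mpr hj2
  · have he : (psi f φ (x (σ j)) - psi f φ xs).toReal = p (σ j) - ps := by
      rw [hrep (σ j), hreps, ← EReal.coe_sub, EReal.toReal_coe]
    rw [he]
    exact hj1
end

section
/- Let {xᵏ}, {γₖ} be sequences generated by the proximal gradient method, suppose Assumption A holds, let {xᵏ}_{k∈K} be a subsequence converging to x*, and suppose ψ has the KL property at x* with constant η > 0. Let k̂ ∈ ℕ be such that ‖xᵏ⁺¹ − xᵏ‖ ≤ η for all k ≥ k̂, let ρ := η + 1/2, let α ∈ (0, 1/2), let L_ρ > 0 be a Lipschitz constant of ∇f on the compact set C_ρ := B_ρ(x*) ∩ {x ∈ X : ψ(x) ≤ ψ(x⁰)}, and let γ̄_ρ > 0 be a constant with γₖ ≤ γ̄_ρ for all k with xᵏ ∈ B_ρ(x*). Then for all k ≥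 k̂ with xᵏ ∈ B_α(x*) one has dist(0, ∂ψ(xᵏ⁺¹)) ≤ (γ̄_ρ + L_ρ)‖xᵏ⁺¹ − xᵏ‖. -/
open Filter Topology Set Pointwise

variable {X : Type*} [NormedAddCommGroup X] [InnerProductSpace ℝ X] [FiniteDimensional ℝ X]

private lemma psi_ne_bot' (f : X → ℝ) (φ : X → EReal) (hφbot : ∀ z : X, φ z ≠ ⊥) (z : X) :
    psi f φ z ≠ ⊥ := by
  simp [psi, EReal.add_eq_bot_iff, hφbot z]

private lemma psi_descent' (f : X → ℝ) (φ : X → EReal) (hφbot : ∀ z : X, φ z ≠ ⊥)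
    {τ γmin γmax δ : ℝ} {x : ℕ → X} {γ : ℕ → ℝ}
    (halg : ProxGrad f φ τ γmin γmax δ x γ) :
    ∀ k, psi f φ (x k) ≠ ⊤ ∧ psi f φ (x k) ≤ psi f φ (x 0) := by
  have hτpos : (0:ℝ) < τ := lt_trans one_pos halg.htau
  intro k
  induction k with
  | zero =>
    refine ⟨?_, le_rfl⟩
    have h0 := halg.hx0
    have hb := hφbot (x 0)
    rw [psi, ← EReal.coe_toReal h0 hb, ← EReal.coe_add]
    exact EReal.coe_ne_top _
  | succ k ih =>
    obtain ⟨γ0, i, y, hγ01, hγ02, hmin, hacc, _, hγk, hxk1⟩ := halg.step k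
    have hγ0pos : 0 < γ0 := lt_of_lt_of_le halg.hgmin hγ01
    have hδ := halg.hdelta0
    have hc : (0:ℝ) ≤ δ * (τ ^ i * γ0) / 2 * ‖y i - x k‖ ^ 2 :=
      mul_nonneg (div_nonneg (mul_nonneg hδ.le (mul_pos (pow_pos hτpos i) hγ0pos).le)
        (by norm_num)) (sq_nonneg _)
    set r := (psi f φ (x k)).toReal with hr
    have hrb : psi f φ (x k) ≠ ⊥ := psi_ne_bot' f φ hφbot (x k)
    have hre : psi f φ (x k) = (r : EReal) := (EReal.coe_toReal ih.1 hrb).symm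
    have hkey : psi f φ (x (k+1)) ≤ ((r - δ * (τ ^ i * γ0) / 2 * ‖y i - x k‖ ^ 2 : ℝ) : EReal) := by
      rw [hxk1, EReal.coe_sub]
      rw [hre] at hacc
      exact hacc
    have hle : psi f φ (x (k+1)) ≤ (r : EReal) := by
      refine le_trans hkey ?_
      exact_mod_cast (by linarith : r - δ * (τ ^ i * γ0) / 2 * ‖y i - x k‖ ^ 2 ≤ r)
    refine ⟨ne_top_of_le_ne_top (EReal.coe_ne_top r) hle, le_trans (hre ▸ hle) ih.2⟩

set_option maxHeartbeats 1000000 in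
/-- for all `k ≥ k̂` with `x k ∈ B_α(x*)` one has
`dist(0, ∂ψ(xᵏ⁺¹)) ≤ (γ̄_ρ + L_ρ) ‖xᵏ⁺¹ - xᵏ‖`. -/
theorem statement12
    (f : X → ℝ) (φ : X → EReal)
    (hf : ContDiff ℝ 1 f) (hφlsc : LowerSemicontinuous φ)
    (hφbot : ∀ z : X, φ z ≠ ⊥) (hproper : ∃ z : X, φ z ≠ ⊤)
    (τ γmin γmax δ : ℝ) (x : ℕ → X) (γ : ℕ → ℝ)
    (halg : ProxGrad f φ τ γmin γmax δ x γ)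
    (hA : AssumptionA f φ)
    (xs : X) (σ : ℕ → ℕ) (hσ : StrictMono σ)
    (hconv : Tendsto (fun k => x (σ k)) atTop (nhds xs))
    (η : ℝ) (χ : ℝ → ℝ) (hKL : HasKLProperty (psi f φ) xs η χ)
    (khat : ℕ) (hkhat : ∀ k ≥ khat, ‖x (k + 1) - x k‖ ≤ η)
    (α : ℝ) (hα : α ∈ Set.Ioo (0 : ℝ) (1 / 2))
    (Lρ : ℝ) (hLρ : 0 < Lρ)
    (hLip : LipschitzOnWith (Real.toNNReal Lρ) (gradient f)
      (Metric.closedBall xs (η + 1 / 2) ∩ {z : X | psi f φ z ≤ psi f φ (x 0)}))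
    (γbar : ℝ) (hγbar : 0 < γbar)
    (hγbarbound : ∀ k : ℕ, x k ∈ Metric.closedBall xs (η + 1 / 2) → γ k ≤ γbar) :
    ∀ k ≥ khat, x k ∈ Metric.closedBall xs α →
      Metric.infDist 0 (limitingSubdiff (psi f φ) (x (k + 1))) ≤
        (γbar + Lρ) * ‖x (k + 1) - x k‖ := by
  have hτpos : (0:ℝ) < τ := lt_trans one_pos halg.htau
  have hηpos : (0:ℝ) < η := hKL.1
  have hdesc := psi_descent' f φ hφbot halg
  intro k hk hball
  obtain ⟨γ0, i, y, hγ01, hγ02, hmin, hacc, _, hγk, hxk1⟩ := halg.step k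
  set q := x k with hq
  set p := x (k+1) with hp
  have hγ0pos : 0 < γ0 := lt_of_lt_of_le halg.hgmin hγ01
  have hgpos : 0 < γ k := hγk ▸ mul_pos (pow_pos hτpos i) hγ0pos
  have hmin' : ∀ z, proxModel f φ q (γ k) p ≤ proxModel f φ q (γ k) z := by
    intro z
    rw [hγk, hxk1]
    exact hmin i le_rfl z
  have hpt : psi f φ p ≠ ⊤ := (hdesc (k+1)).1
  have hφpt : φ p ≠ ⊤ := by
    intro h
    apply hpt
    rw [psi, h, EReal.add_top_of_ne_bot (EReal.coe_ne_bot _)]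
  set a := (φ p).toReal with ha
  have hφp : φ p = (a : EReal) := (EReal.coe_toReal hφpt (hφbot p)).symm
  set w := gradient f p - gradient f q - γ k • (p - q) with hw
  -- Fréchet subdifferential membership
  have hwF : w ∈ frechetSubdiff (psi f φ) p := by
    intro ε hε
    have hdiff : DifferentiableAt ℝ f p := (hf.differentiable one_ne_zero).differentiableAt
    have hlo := hasGradientAt_iff_isLittleO.mp hdiff.hasGradientAt
    have h1 : ∀ᶠ z in nhds p, ‖f z - f p - (inner ℝ (gradient f p) (z - p) : ℝ)‖ ≤ ε/2 * ‖z - p‖ :=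
      hlo.def (by linarith)
    have h2 : ∀ᶠ z in nhds p, ‖z - p‖ ≤ ε / γ k := by
      have hmem : Metric.closedBall p (ε / γ k) ∈ nhds p :=
        Metric.closedBall_mem_nhds p (div_pos hε hgpos)
      filter_upwards [hmem] with z hz
      simpa [dist_eq_norm] using hz
    filter_upwards [h1, h2] with z hz1 hz2
    by_cases hzt : φ z = ⊤
    · have hzz : psi f φ z = ⊤ := by
        rw [psi, hzt, EReal.add_top_of_ne_bot (EReal.coe_ne_bot _)]
      rw [hzz]; exact le_top
    · set b := (φ z).toReal with hb
      have hφz : φ z = (b : EReal) := (EReal.coe_toReal hzt (hφbot z)).symm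
      have hmz := hmin' z
      rw [proxModel, proxModel] at hmz
      simp only [hφp, hφz, ← EReal.coe_add, EReal.coe_le_coe_iff] at hmz
      rw [psi, psi]
      simp only [hφp, hφz, ← EReal.coe_add, ← EReal.coe_sub, EReal.coe_le_coe_iff]
      -- now a real inequality
      have e1 : (inner ℝ (gradient f q) (z - q) : ℝ) - (inner ℝ (gradient f q) (p - q) : ℝ)
          = (inner ℝ (gradient f q) (z - p) : ℝ) := by
        rw [← inner_sub_right]
        congr 1
        abel
      have e2 : ‖z - q‖ ^ 2 = ‖z - p‖ ^ 2 + 2 * (inner ℝ (z - p) (p - q) : ℝ) + ‖p - q‖ ^ 2 := by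
        rw [show z - q = (z - p) + (p - q) by abel, norm_add_sq_real]
      have e3 : (inner ℝ w (z - p) : ℝ) = (inner ℝ (gradient f p) (z - p) : ℝ)
          - (inner ℝ (gradient f q) (z - p) : ℝ) - γ k * (inner ℝ (p - q) (z - p) : ℝ) := by
        rw [hw]
        simp [inner_sub_left, real_inner_smul_left]
      have e4 : (inner ℝ (z - p) (p - q) : ℝ) = (inner ℝ (p - q) (z - p) : ℝ) :=
        real_inner_comm _ _
      have hb1 : -(ε/2 * ‖z - p‖) ≤ f z - f p - (inner ℝ (gradient f p) (z - p) : ℝ) := by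
        rw [Real.norm_eq_abs] at hz1
        linarith [neg_abs_le (f z - f p - (inner ℝ (gradient f p) (z - p) : ℝ))]
      have hb2 : γ k / 2 * ‖z - p‖ ^ 2 ≤ ε/2 * ‖z - p‖ := by
        have hn : (0:ℝ) ≤ ‖z - p‖ := norm_nonneg _
        have : γ k * ‖z - p‖ ≤ ε := by
          calc γ k * ‖z - p‖ ≤ γ k * (ε / γ k) := by
                exact mul_le_mul_of_nonneg_left hz2 hgpos.le
            _ = ε := by field_simp
        nlinarith [mul_le_mul_of_nonneg_right this hn]
      rw [e2, e4] at hmz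
      linarith [hmz, e1, e3, hb1, hb2]
  have hwL : w ∈ limitingSubdiff (psi f φ) p :=
    ⟨fun _ => p, fun _ => w, tendsto_const_nhds, tendsto_const_nhds, tendsto_const_nhds,
      fun _ => hwF⟩
  have hle : Metric.infDist 0 (limitingSubdiff (psi f φ) p) ≤ ‖w‖ := by
    have h0 := Metric.infDist_le_dist_of_mem (x := (0:X)) hwL
    rwa [dist_zero_left] at h0
  have hballq : dist q xs ≤ α := Metric.mem_closedBall.mp hball
  have hα2 : α < 1/2 := hα.2
  have hpq : ‖p - q‖ ≤ η := hkhat k hk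
  have hqmem : q ∈ Metric.closedBall xs (η + 1/2) ∩ {z : X | psi f φ z ≤ psi f φ (x 0)} := by
    refine ⟨Metric.mem_closedBall.mpr (by linarith), (hdesc k).2⟩
  have hpmem : p ∈ Metric.closedBall xs (η + 1/2) ∩ {z : X | psi f φ z ≤ psi f φ (x 0)} := by
    refine ⟨Metric.mem_closedBall.mpr ?_, (hdesc (k+1)).2⟩
    calc dist p xs ≤ dist p q + dist q xs := dist_triangle _ _ _
      _ ≤ η + 1/2 := by rw [dist_eq_norm]; linarith
  have hLipb : ‖gradient f p - gradient f q‖ ≤ Lρ * ‖p - q‖ := by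
    have hd := hLip.dist_le_mul p hpmem q hqmem
    rw [dist_eq_norm, dist_eq_norm, Real.coe_toNNReal _ hLρ.le] at hd
    exact hd
  have hγb : γ k ≤ γbar := hγbarbound k hqmem.1
  have hwnorm : ‖w‖ ≤ (γbar + Lρ) * ‖p - q‖ := by
    have h1 : ‖w‖ ≤ ‖gradient f p - gradient f q‖ + ‖γ k • (p - q)‖ := norm_sub_le _ _
    rw [norm_smul, Real.norm_eq_abs, abs_of_pos hgpos] at h1
    have h2 : γ k * ‖p - q‖ ≤ γbar * ‖p - q‖ :=
      mul_le_mul_of_nonneg_right hγb (norm_nonneg _)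
    linarith
  exact le_trans hle hwnorm
end
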